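/- arXiv:1403.3470 — 13 statements merged into one kernel-verified Lean document; each statement's English description precedes it below -/
import Mathlib

section
/- For every n ≥ 4, the sequence satisfies (1+√(4n-3))/2 < x_n < (1+√(4n+1))/2. -/
theorem key_lemma (x : ℕ → ℚ) (hx0 : x 0 = 1)
    (hx : ∀ n : ℕ, x (n + 1) = 1 + (n : ℚ) / x n) :
    ∀ n : ℕ, 4 ≤ n →
      1 < x n ∧ (n : ℚ) - 1 < x n * (x n - 1) ∧ x n * (x n - 1) < n := by
  intro n hn
  induction n, hn using Nat.le_induction with
  | base =>
    have h1 : x 1 = 1 := by rw [hx 0, hx0]; norm_num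
    have h2 : x 2 = 2 := by rw [hx 1, h1]; norm_num
    have h3 : x 3 = 2 := by rw [hx 2, h2]; norm_num
    have h4 : x 4 = 5/2 := by rw [hx 3, h3]; norm_num
    rw [h4]; norm_num
  | succ n hn ih =>
    obtain ⟨h1, h2, h3⟩ := ih
    have hy : 0 < x n := by linarith
    have hn0 : (0:ℚ) < n := by
      have : (4:ℚ) ≤ n := by exact_mod_cast hn
      linarith
    set y := x n with hyd
    rw [hx n]
    have hz : (1 + (n:ℚ)/y) * (1 + (n:ℚ)/y - 1) = (y + n) * n / y^2 := by
      field_simp; ring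
    have hysq : 0 < y^2 := by positivity
    refine ⟨by have := div_pos hn0 hy; linarith, ?_, ?_⟩
    · push_cast
      rw [hz, lt_div_iff₀ hysq]
      have hlt : y^2 < y + n := by nlinarith
      nlinarith [mul_lt_mul_of_pos_left hlt hn0]
    · push_cast
      rw [hz, div_lt_iff₀ hysq]
      have hgt : y + n - 1 < y^2 := by nlinarith
      nlinarith [mul_lt_mul_of_pos_left hgt (show (0:ℚ) < n + 1 by linarith)]

theorem stmt_0 (x : ℕ → ℚ) (hx0 : x 0 = 1)
    (hx : ∀ n : ℕ, x (n + 1) = 1 + (n : ℚ) / x n) :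
    ∀ n : ℕ, 4 ≤ n →
      (1 + Real.sqrt (4 * n - 3)) / 2 < (x n : ℝ) ∧
      (x n : ℝ) < (1 + Real.sqrt (4 * n + 1)) / 2 := by
  intro n hn
  obtain ⟨h1, h2, h3⟩ := key_lemma x hx0 hx n hn
  have h1' : (1:ℝ) < (x n : ℝ) := by exact_mod_cast h1
  have h2' : (n : ℝ) - 1 < (x n : ℝ) * ((x n : ℝ) - 1) := by exact_mod_cast h2
  have h3' : (x n : ℝ) * ((x n : ℝ) - 1) < (n : ℝ) := by exact_mod_cast h3
  set y : ℝ := (x n : ℝ) with hyd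
  constructor
  · have : Real.sqrt (4 * n - 3) < 2 * y - 1 := by
      rw [Real.sqrt_lt' (by linarith)]
      nlinarith
    linarith
  · have : 2 * y - 1 < Real.sqrt (4 * n + 1) := by
      have hn4 : (4:ℝ) ≤ n := by exact_mod_cast hn
      have hs : Real.sqrt (4 * n + 1) ^ 2 = 4 * (n:ℝ) + 1 :=
        Real.sq_sqrt (by linarith)
      nlinarith [Real.sqrt_nonneg (4 * (n:ℝ) + 1),
        sq_nonneg (Real.sqrt (4 * n + 1) - (2 * y - 1))]
    linarith
end

section
/- The only indices n for which x_n is an integer are n = 0, 1, 2, 3 (with values 1, 1, 2, 2). -/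
def T : ℕ → ℕ
  | 0 => 1
  | 1 => 1
  | (n+2) => T (n+1) + (n+1) * T n

lemma T_rec (n : ℕ) : T (n+2) = T (n+1) + (n+1) * T n := rfl

lemma T_pos (n : ℕ) : 0 < T n := by
  induction n using Nat.twoStepInduction with
  | zero => exact one_pos
  | one => exact one_pos
  | more n ih1 ih2 => rw [T_rec]; positivity

lemma T_lt (n : ℕ) : T (n+1) < T (n+2) := by
  rw [T_rec]
  have := T_pos n
  nlinarith

lemma T_growth (n : ℕ) : 2 * T (n+3) < T (n+4) := by
  have e4 : T (n+4) = T (n+3) + (n+3) * T (n+2) := T_rec (n+2)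
  have e3 : T (n+3) = T (n+2) + (n+2) * T (n+1) := T_rec (n+1)
  nlinarith [T_lt n, T_pos (n+1), T_pos (n+2)]

def Mm : ℕ → ℕ
  | 0 => 1
  | (k+1) => (2*k+1) * Mm k

lemma T_sum (n : ℕ) : T n = ∑ k ∈ Finset.range (n+1), n.choose (2*k) * Mm k := by
  induction n using Nat.twoStepInduction with
  | zero => decide
  | one => decide
  | more n ih1 ih2 =>
    rw [T_rec, ih1, ih2]
    rw [Finset.sum_range_succ' (fun k => (n+2).choose (2*k) * Mm k) (n+2)]
    have e1 : ∀ k, (n+2).choose (2*(k+1)) * Mm (k+1)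
        = (n+1) * n.choose (2*k) * Mm k + (n+1).choose (2*k+2) * Mm (k+1) := by
      intro k
      have h2 : 2*(k+1) = (2*k+1)+1 := by ring
      rw [h2, show n+2 = (n+1)+1 from rfl, Nat.choose_succ_succ]
      have h3 : (n+1) * n.choose (2*k) = (n+1).choose (2*k+1) * (2*k+1) := by
        exact_mod_cast Nat.add_one_mul_choose_eq n (2*k)
      rw [show Mm (k+1) = (2*k+1) * Mm k from rfl]
      rw [add_mul]
      rw [show (n+1).choose (2*k+1) * ((2*k+1) * Mm k) = ((n+1) * n.choose (2*k)) * Mm k by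
        rw [h3]; ring]
    rw [Finset.sum_congr rfl (fun k _ => e1 k)]
    have e2 : ∑ x ∈ Finset.range (n+2), (n+1) * n.choose (2*x) * Mm x
        = (n+1) * ∑ k ∈ Finset.range (n+1), n.choose (2*k) * Mm k := by
      rw [Finset.sum_range_succ, Nat.choose_eq_zero_of_lt (by omega), Finset.mul_sum]
      simp [mul_assoc]
    have e3 : ∑ x ∈ Finset.range (n+2), (n+1).choose (2*x+2) * Mm (x+1)
        + (n+2).choose (2*0) * Mm 0
        = ∑ k ∈ Finset.range (n+1+1), (n+1).choose (2*k) * Mm k := by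
      rw [Finset.sum_range_succ' (fun k => (n+1).choose (2*k) * Mm k) (n+1)]
      rw [Finset.sum_range_succ, Nat.choose_eq_zero_of_lt (by omega)]
      simp only [Nat.choose_zero_right, Mm, mul_one, Nat.zero_mul, zero_mul, add_zero,
        Nat.mul_zero]
      apply congrArg (fun z => z + 1)
      apply Finset.sum_congr rfl
      intro k _
      have : 2*(k+1) = 2*k+2 := by omega
      rw [this]
    rw [Finset.sum_add_distrib, e2]
    omega

lemma T_p {p : ℕ} (hp : p.Prime) (hodd : p % 2 = 1) : (T p : ZMod p) = 1 := by
  rw [T_sum]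
  push_cast
  rw [Finset.sum_eq_single 0]
  · simp [Mm]
  · intro k _ hk
    rcases lt_or_ge (2*k) p with h | h
    · have : (p : ℕ) ∣ p.choose (2*k) := hp.dvd_choose_self (by omega) h
      rw [(ZMod.natCast_eq_zero_iff _ _).mpr this]
      ring
    · have : p < 2*k := by omega
      rw [Nat.choose_eq_zero_of_lt this]
      push_cast
      ring
  · intro h
    simp at h

lemma T_mul_block {p : ℕ} (hp : p.Prime) {m : ℕ} (hm : p ∣ m) :
    ∀ j, ((T (m + j) : ZMod p)) = (T m : ZMod p) * (T j : ZMod p) := by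
  have hm0 : ((m : ℕ) : ZMod p) = 0 := (ZMod.natCast_eq_zero_iff _ _).mpr hm
  intro j
  induction j using Nat.twoStepInduction with
  | zero => simp [T]
  | one =>
    match m, hm with
    | 0, _ => simp [T]
    | (m'+1), hm =>
      rw [show m'+1+1 = m'+2 from rfl, T_rec]
      push_cast
      rw [show ((m' : ZMod p) + 1) = ((m'+1 : ℕ) : ZMod p) by push_cast; ring, hm0]
      simp [T]
  | more j ih1 ih2 =>
    rw [show m + (j+2) = (m + j) + 2 from rfl, T_rec, show m+j+1 = m + (j+1) from rfl]
    push_cast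
    rw [ih1, ih2, hm0]
    rw [show (T (j+2) : ZMod p) = (T (j+1) : ZMod p) + ((j:ZMod p)+1) * (T j : ZMod p) by
      rw [T_rec]; push_cast; ring]
    ring

lemma T_one_of_dvd {p : ℕ} (hp : p.Prime) (hodd : p % 2 = 1) {m : ℕ} (hm : p ∣ m) :
    (T m : ZMod p) = 1 := by
  obtain ⟨t, rfl⟩ := hm
  induction t with
  | zero => simp [T]
  | succ t ih =>
    rw [show p * (t+1) = p*t + p by ring, T_mul_block hp ⟨t, rfl⟩ p]
    rw [ih, T_p hp hodd]
    ring

lemma odd_prime_not_dvd_T {p m : ℕ} (hp : p.Prime) (hodd : p % 2 = 1) (hm : p ∣ m) :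
    ¬ p ∣ T m := by
  intro hdvd
  haveI := Fact.mk hp
  have h1 : (T m : ZMod p) = 0 := (ZMod.natCast_eq_zero_iff _ _).mpr hdvd
  rw [T_one_of_dvd hp hodd hm] at h1
  exact one_ne_zero h1

lemma T_step (q u0 u1 : ℕ) (h0 : u0 % 2 = 1) (h1 : u1 % 2 = 1) (h8 : u1 % 8 = u0 % 8)
    (e0 : T (4*q) = 2^q * u0) (e1 : T (4*q+1) = 2^q * u1) :
    ∃ u2 u3 v0 v1, u2 % 2 = 1 ∧ u3 % 2 = 1 ∧ v0 % 2 = 1 ∧ v1 % 2 = 1 ∧ v1 % 8 = v0 % 8 ∧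
      T (4*q+2) = 2^(q+1) * u2 ∧ T (4*q+3) = 2^(q+2) * u3 ∧
      T (4*q+4) = 2^(q+1) * v0 ∧ T (4*q+5) = 2^(q+1) * v1 := by
  -- mod facts about products
  have hK : (q * u0) % 2 = q % 2 := by
    have := Nat.mul_mod q u0 2; rw [h0] at this; omega
  have hL : (q * u1) % 2 = q % 2 := by
    have := Nat.mul_mod q u1 2; rw [h1] at this; omega
  -- u2
  obtain ⟨u2, hu2⟩ : ∃ u2, u1 + (4*q+1)*u0 = 2*u2 := by
    refine ⟨(u1 + (4*q+1)*u0)/2, ?_⟩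
    have : (4*q+1)*u0 = 4*(q*u0) + u0 := by ring
    omega
  have hu2e : u1 + (4*q+1)*u0 = 4*(q*u0) + (u1 + u0) := by ring
  have h2odd : u2 % 2 = 1 := by
    set K := q * u0 with hKdef
    omega
  -- u3
  obtain ⟨u3, hu3⟩ : ∃ u3, u2 + (2*q+1)*u1 = 2*u3 := by
    refine ⟨(u2 + (2*q+1)*u1)/2, ?_⟩
    have : (2*q+1)*u1 = 2*(q*u1) + u1 := by ring
    omega
  have hu3e : u2 + (2*q+1)*u1 = 2*(q*u1) + (u2 + u1) := by ring
  have h3odd : u3 % 2 = 1 := by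
    set K := q * u0 with hKdef
    set L := q * u1 with hLdef
    omega
  -- v0
  obtain ⟨v0, hv0⟩ : ∃ v0, 2*u3 + (4*q+3)*u2 = v0 := ⟨_, rfl⟩
  have hv0e : 2*u3 + (4*q+3)*u2 = 4*(q*u2) + (2*u3 + 3*u2) := by ring
  have hJ : (q * u2) % 2 = q % 2 := by
    have := Nat.mul_mod q u2 2; rw [h2odd] at this; omega
  have h0odd : v0 % 2 = 1 := by
    set J := q * u2 with hJdef
    omega
  -- v1
  obtain ⟨v1, hv1⟩ : ∃ v1, v0 + 8*((q+1)*u3) = v1 := ⟨_, rfl⟩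
  have h1odd : v1 % 2 = 1 := by set W := (q+1)*u3 with hW; omega
  have h8' : v1 % 8 = v0 % 8 := by set W := (q+1)*u3 with hW; omega
  refine ⟨u2, u3, v0, v1, h2odd, h3odd, h0odd, h1odd, h8', ?_, ?_, ?_, ?_⟩
  · -- T (4q+2)
    have := T_rec (4*q)
    rw [e0, e1] at this
    rw [show 4*q+2 = 4*q+2 from rfl] at this
    rw [this, show 2^(q+1) * u2 = 2^q * (2 * u2) by ring, ← hu2]
    ring
  · -- T (4q+3)
    have h2 : T (4*q+2) = 2^(q+1)*u2 := by
      have := T_rec (4*q); rw [e0, e1] at this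
      rw [this, show 2^(q+1) * u2 = 2^q * (2 * u2) by ring, ← hu2]; ring
    have := T_rec (4*q+1)
    rw [show 4*q+1+2 = 4*q+3 from rfl, show 4*q+1+1 = 4*q+2 from rfl] at this
    rw [this, h2, e1, show 2^(q+2) * u3 = 2^(q+1) * (2 * u3) by ring, ← hu3]
    ring
  · -- T (4q+4)
    have h2 : T (4*q+2) = 2^(q+1)*u2 := by
      have := T_rec (4*q); rw [e0, e1] at this
      rw [this, show 2^(q+1) * u2 = 2^q * (2 * u2) by ring, ← hu2]; ring
    have h3 : T (4*q+3) = 2^(q+2)*u3 := by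
      have := T_rec (4*q+1)
      rw [show 4*q+1+2 = 4*q+3 from rfl, show 4*q+1+1 = 4*q+2 from rfl] at this
      rw [this, h2, e1, show 2^(q+2) * u3 = 2^(q+1) * (2 * u3) by ring, ← hu3]; ring
    have := T_rec (4*q+2)
    rw [show 4*q+2+2 = 4*q+4 from rfl, show 4*q+2+1 = 4*q+3 from rfl] at this
    rw [this, h2, h3, ← hv0]
    ring
  · -- T (4q+5)
    have h2 : T (4*q+2) = 2^(q+1)*u2 := by
      have := T_rec (4*q); rw [e0, e1] at this
      rw [this, show 2^(q+1) * u2 = 2^q * (2 * u2) by ring, ← hu2]; ring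
    have h3 : T (4*q+3) = 2^(q+2)*u3 := by
      have := T_rec (4*q+1)
      rw [show 4*q+1+2 = 4*q+3 from rfl, show 4*q+1+1 = 4*q+2 from rfl] at this
      rw [this, h2, e1, show 2^(q+2) * u3 = 2^(q+1) * (2 * u3) by ring, ← hu3]; ring
    have h4 : T (4*q+4) = 2^(q+1)*v0 := by
      have := T_rec (4*q+2)
      rw [show 4*q+2+2 = 4*q+4 from rfl, show 4*q+2+1 = 4*q+3 from rfl] at this
      rw [this, h2, h3, ← hv0]; ring
    have := T_rec (4*q+3)
    rw [show 4*q+3+2 = 4*q+5 from rfl, show 4*q+3+1 = 4*q+4 from rfl] at this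
    rw [this, h3, h4, ← hv1]
    ring

lemma T_block : ∀ q, ∃ u0 u1, u0 % 2 = 1 ∧ u1 % 2 = 1 ∧ u1 % 8 = u0 % 8 ∧
    T (4*q) = 2^q * u0 ∧ T (4*q+1) = 2^q * u1 := by
  intro q
  induction q with
  | zero => exact ⟨1, 1, rfl, rfl, rfl, by decide, by decide⟩
  | succ q ih =>
    obtain ⟨u0, u1, h0, h1, h8, e0, e1⟩ := ih
    obtain ⟨u2, u3, v0, v1, _, _, hv0, hv1, hv8, _, _, e4, e5⟩ := T_step q u0 u1 h0 h1 h8 e0 e1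
    exact ⟨v0, v1, hv0, hv1, hv8, by rw [show 4*(q+1) = 4*q+4 by ring, e4], 
      by rw [show 4*(q+1)+1 = 4*q+5 by ring, e5]⟩

lemma T_four_dvd {q : ℕ} (hq : 1 ≤ q) :
    ∃ u0 u3, u0 % 2 = 1 ∧ T (4*q) = 2^q * u0 ∧ T (4*q-1) = 2^(q+1) * u3 := by
  obtain ⟨q', rfl⟩ : ∃ q', q = q'+1 := ⟨q-1, by omega⟩
  obtain ⟨u0, u1, h0, h1, h8, e0, e1⟩ := T_block q'
  obtain ⟨u2, u3, v0, v1, _, h3odd, hv0, _, _, _, e3, e4, _⟩ := T_step q' u0 u1 h0 h1 h8 e0 e1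
  refine ⟨v0, u3, hv0, ?_, ?_⟩
  · rw [show 4*(q'+1) = 4*q'+4 by ring, e4]
  · rw [show 4*(q'+1)-1 = 4*q'+3 by omega, e3, show q'+1+1 = q'+2 from rfl]

lemma x_formula (x : ℕ → ℚ) (hx0 : x 0 = 1)
    (hx : ∀ n : ℕ, x (n + 1) = 1 + (n : ℚ) / x n) :
    ∀ n : ℕ, x (n+1) = (T (n+1) : ℚ) / (T n : ℚ) := by
  intro n
  induction n with
  | zero => rw [hx 0]; norm_num [T]
  | succ n ih =>
    have hT0 : ((T n : ℚ)) ≠ 0 := by exact_mod_cast (T_pos n).ne'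
    have hT1 : ((T (n+1) : ℚ)) ≠ 0 := by exact_mod_cast (T_pos (n+1)).ne'
    rw [hx (n+1), ih, T_rec]
    push_cast
    field_simp

lemma key (x : ℕ → ℚ) (hx0 : x 0 = 1)
    (hx : ∀ n : ℕ, x (n + 1) = 1 + (n : ℚ) / x n) :
    ∀ n : ℕ, 4 ≤ n → ∀ k : ℤ, x n ≠ (k : ℚ) := by
  intro n hn k hk
  obtain ⟨m, rfl⟩ : ∃ m, n = m + 1 := ⟨n-1, by omega⟩
  have hm : 3 ≤ m := by omega
  rw [x_formula x hx0 hx m] at hk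
  have hT0 : ((T m : ℚ)) ≠ 0 := by exact_mod_cast (T_pos m).ne'
  -- T m ∣ T (m+1)
  have hdvdZ : ((T m : ℤ)) ∣ ((T (m+1) : ℤ)) := by
    refine ⟨k, ?_⟩
    have h2 : ((T (m+1) :ℤ) : ℚ) = ((T m * k : ℤ) : ℚ) := by
      push_cast
      field_simp at hk
      linarith [hk]
    exact_mod_cast h2
  have hdvd : T m ∣ T (m+1) := Int.ofNat_dvd.mp hdvdZ
  -- hence T m ∣ m * T (m-1)
  obtain ⟨m', rfl⟩ : ∃ m', m = m' + 3 := ⟨m-3, by omega⟩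
  have hrec : T (m'+3+1) = T (m'+3) + (m'+3) * T (m'+2) := T_rec (m'+2)
  have hdvd2 : T (m'+3) ∣ (m'+3) * T (m'+2) := by
    rw [hrec] at hdvd
    exact (Nat.dvd_add_right dvd_rfl).mp hdvd
  set d := Nat.gcd (T (m'+3)) (T (m'+2)) with hd
  have hdpos : 0 < d := Nat.gcd_pos_of_pos_left _ (T_pos (m'+3))
  have hdT : d ∣ T (m'+3) := Nat.gcd_dvd_left _ _
  have hdT' : d ∣ T (m'+2) := Nat.gcd_dvd_right _ _
  set a := T (m'+3) / d with ha
  set b := T (m'+2) / d with hb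
  have hab : Nat.Coprime a b := Nat.coprime_div_gcd_div_gcd hdpos
  have haT : a * d = T (m'+3) := Nat.div_mul_cancel hdT
  have hbT : b * d = T (m'+2) := Nat.div_mul_cancel hdT'
  have hadvd : a ∣ m' + 3 := by
    obtain ⟨c, hc⟩ := hdvd2
    have hmb : (m'+3) * b * d = a * c * d := by
      rw [mul_assoc, hbT, mul_assoc a c d, mul_comm c d, ← mul_assoc, haT, hc]
    have : (m'+3) * b = a * c := Nat.eq_of_mul_eq_mul_right hdpos hmb
    exact hab.dvd_of_dvd_mul_right ⟨c, this⟩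
  have haTm : a ∣ T (m'+3) := ⟨d, haT.symm⟩
  have hapos : 0 < a := by
    rcases Nat.eq_zero_or_pos a with h | h
    · exfalso; have h2 := haT; rw [h] at h2; simp at h2; exact (T_pos (m'+3)).ne' h2.symm
    · exact h
  -- every prime factor of a is 2
  have ha2 : ∀ p, p.Prime → p ∣ a → p = 2 := by
    intro p hp hpa
    rcases hp.eq_two_or_odd with h | h
    · exact h
    · exfalso
      exact odd_prime_not_dvd_T hp h (hpa.trans hadvd) (hpa.trans haTm)
  have hTlt : T (m'+2) < T (m'+3) := T_lt (m'+1)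
  have hcontra1 : a = 1 → False := by
    intro h1
    have hdm := haT
    rw [h1, one_mul] at hdm
    have hle : T (m'+3) ≤ T (m'+2) := Nat.le_of_dvd (T_pos _) (hdm ▸ hdT')
    exact absurd hle (not_le.mpr hTlt)
  have haodd1 : a % 2 = 1 → a = 1 := by
    intro hodd
    by_contra hne
    obtain ⟨p, hp, hpa⟩ := Nat.exists_prime_and_dvd hne
    have := ha2 p hp hpa
    subst this
    omega
  have hgrow : 3 ≤ m' → 2 * T (m'+2) < T (m'+3) := by
    intro h3
    obtain ⟨m'', rfl⟩ : ∃ m'', m' = m'' + 1 := ⟨m'-1, by omega⟩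
    exact T_growth m''
  by_cases h4mm : 4 ∣ (m'+3)
  · -- 4 | m : use 2-adic structure to show a is odd, hence 1
    obtain ⟨q, hq⟩ := h4mm
    have hq1 : 1 ≤ q := by omega
    obtain ⟨u0, u3, hu0odd, hTm, hTm1⟩ := T_four_dvd hq1
    rw [← hq] at hTm
    have hm1 : 4*q - 1 = m'+2 := by omega
    rw [hm1] at hTm1
    have h2qd : 2^q ∣ d := by
      apply Nat.dvd_gcd
      · rw [hTm]; exact Dvd.intro _ rfl
      · rw [hTm1, pow_succ]
        exact ⟨2*u3, by ring⟩
    obtain ⟨e, he⟩ := h2qd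
    have hae : a * e = u0 := by
      have h5 : a * (2^q * e) = 2^q * u0 := by rw [← he, haT, hTm]
      have h2 : 2^q * (a * e) = 2^q * u0 := by rw [← h5]; ring
      exact Nat.eq_of_mul_eq_mul_left (pow_pos (by norm_num) q) h2
    have haodd : a % 2 = 1 := by
      rcases Nat.even_or_odd a with h | h
      · exfalso
        obtain ⟨c, hc⟩ := h
        have : (2:ℕ) ∣ u0 := ⟨c * e, by rw [← hae, hc]; ring⟩
        omega
      · exact Nat.odd_iff.mp h
    exact hcontra1 (haodd1 haodd)
  · -- 4 ∤ m
    rcases Nat.even_or_odd a with haeven | haodd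
    swap
    · exact hcontra1 (haodd1 (Nat.odd_iff.mp haodd))
    obtain ⟨a', ha'⟩ : ∃ a', a = 2 * a' := by
      obtain ⟨c, hc⟩ := haeven; exact ⟨c, by omega⟩
    have ha'odd : a' % 2 = 1 := by
      rcases Nat.even_or_odd a' with h | h
      · exfalso
        obtain ⟨c, hc⟩ := h
        exact h4mm (dvd_trans ⟨c, by omega⟩ hadvd)
      · exact Nat.odd_iff.mp h
    have ha'1 : a' = 1 := by
      by_contra hne
      obtain ⟨p, hp, hpa⟩ := Nat.exists_prime_and_dvd hne
      have hpA : p ∣ a := hpa.trans ⟨2, by rw [ha']; ring⟩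
      have := ha2 p hp hpA
      subst this
      omega
    have ha2val : a = 2 := by omega
    have hmeven : (2:ℕ) ∣ (m'+3) := by rw [← ha2val]; exact hadvd
    have hm'3 : 3 ≤ m' := by
      rcases hmeven with ⟨c, hc⟩
      by_contra hlt
      push_neg at hlt
      interval_cases m' <;> omega
    have hdle : d ≤ T (m'+2) := Nat.le_of_dvd (T_pos _) hdT'
    have hg := hgrow hm'3
    have hT2d : T (m'+3) = 2 * d := by rw [← haT, ha2val]
    omega

theorem stmt_1 (x : ℕ → ℚ) (hx0 : x 0 = 1)
    (hx : ∀ n : ℕ, x (n + 1) = 1 + (n : ℚ) / x n) :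
    (∀ n : ℕ, (∃ m : ℤ, x n = (m : ℚ)) ↔ n ≤ 3) ∧
    x 0 = 1 ∧ x 1 = 1 ∧ x 2 = 2 ∧ x 3 = 2 := by
  have h1 : x 1 = 1 := by rw [hx 0]; norm_num
  have h2 : x 2 = 2 := by rw [hx 1, h1]; norm_num
  have h3 : x 3 = 2 := by rw [hx 2, h2]; norm_num
  refine ⟨?_, hx0, h1, h2, h3⟩
  intro n
  constructor
  · rintro ⟨m, hm⟩
    by_contra hgt
    push_neg at hgt
    exact key x hx0 hx n (by omega) m hm
  · intro hn
    interval_cases n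
    · exact ⟨1, by rw [hx0]; norm_num⟩
    · exact ⟨1, by rw [h1]; norm_num⟩
    · exact ⟨2, by rw [h2]; norm_num⟩
    · exact ⟨2, by rw [h3]; norm_num⟩
end

section
/- For every n ≥ 4, n - 1 < x_n² - x_n < n. -/
theorem stmt_2 (x : ℕ → ℚ) (hx0 : x 0 = 1)
    (hx : ∀ n : ℕ, x (n + 1) = 1 + (n : ℚ) / x n) :
    ∀ n : ℕ, 4 ≤ n → (n : ℚ) - 1 < (x n) ^ 2 - x n ∧ (x n) ^ 2 - x n < (n : ℚ) := by
  have hone : ∀ n : ℕ, 1 ≤ x n := by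
    intro n
    induction n with
    | zero => rw [hx0]
    | succ k ih =>
      rw [hx k]
      have hpos : 0 < x k := lt_of_lt_of_le one_pos ih
      have : (0:ℚ) ≤ (k:ℚ) / x k := div_nonneg (by positivity) (le_of_lt hpos)
      linarith
  intro n hn
  induction n, hn using Nat.le_induction with
  | base =>
    have h1 : x 1 = 1 := by rw [hx 0, hx0]; norm_num
    have h2 : x 2 = 2 := by rw [hx 1, h1]; norm_num
    have h3 : x 3 = 2 := by rw [hx 2, h2]; norm_num
    have h4 : x 4 = 5/2 := by rw [hx 3, h3]; norm_num
    rw [h4]; norm_num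
  | succ n hn ih =>
    obtain ⟨h1, h2⟩ := ih
    have hy1 : 1 ≤ x n := hone n
    have hy : (0:ℚ) < x n := lt_of_lt_of_le one_pos hy1
    have hn4 : (4:ℚ) ≤ (n:ℚ) := by exact_mod_cast hn
    have key : (x (n+1))^2 - x (n+1) = ((n:ℚ) * (x n + n)) / (x n)^2 := by
      rw [hx n]; field_simp; ring
    push_cast
    rw [key]
    constructor
    · rw [lt_div_iff₀ (by positivity)]
      nlinarith
    · rw [div_lt_iff₀ (by positivity)]
      nlinarith
end

section
/- For all n ≥ 1, x_n = a_n / a_{n-1}. -/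
theorem stmt_4 (x : ℕ → ℚ) (hx0 : x 0 = 1)
    (hx : ∀ n : ℕ, x (n + 1) = 1 + (n : ℚ) / x n)
    (a : ℕ → ℤ) (ha0 : a 0 = 1) (ha1 : a 1 = 1)
    (ha : ∀ n : ℕ, a (n + 2) = a (n + 1) + (n + 1) * a n) :
    ∀ n : ℕ, 1 ≤ n → x n = (a n : ℚ) / (a (n - 1) : ℚ) := by
  have hpos : ∀ n : ℕ, 1 ≤ a n := by
    intro n
    induction n using Nat.strong_induction_on with
    | _ n ih =>
      match n with
      | 0 => omega
      | 1 => omega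
      | (k+2) =>
        have h1 := ih (k+1) (by omega)
        have h2 := ih k (by omega)
        have := ha k
        nlinarith
  intro n hn
  induction n with
  | zero => omega
  | succ m ih =>
    match m with
    | 0 =>
      simp [hx 0, hx0, ha1, ha0]
    | (k+1) =>
      have hm := ih (by omega)
      have hak1 : (0:ℚ) < (a (k+1) : ℚ) := by exact_mod_cast hpos (k+1)
      have hak2 : (0:ℚ) < (a (k+2) : ℚ) := by exact_mod_cast hpos (k+2)
      have hak : (0:ℚ) < (a k : ℚ) := by exact_mod_cast hpos k
      rw [hx (k+1), hm]
      simp only [Nat.add_sub_cancel]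
      field_simp
      have := ha k
      push_cast [this]
      ring
end

section
/- For every n ≥ 0, a_n ≥ √(n!). -/
open Nat

theorem stmt_5 (a : ℕ → ℤ) (ha0 : a 0 = 1) (ha1 : a 1 = 1)
    (ha : ∀ n : ℕ, a (n + 2) = a (n + 1) + (n + 1) * a n) :
    ∀ n : ℕ, Real.sqrt (n ! : ℝ) ≤ (a n : ℝ) := by
  have hpos : ∀ n, 1 ≤ a n := by
    intro n
    induction n using Nat.strong_induction_on with
    | _ n ih =>
      match n with
      | 0 => simpa using ha0.ge
      | 1 => simpa using ha1.ge
      | (k+2) =>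
        have h1 := ih (k+1) (by omega)
        have h2 := ih k (by omega)
        rw [ha k]
        nlinarith [Int.ofNat_nonneg k]
  have hmono : ∀ n, a n ≤ a (n + 1) := by
    intro n
    match n with
    | 0 => simp [ha0, ha1]
    | (k+1) =>
      rw [ha k]
      nlinarith [hpos k, Int.ofNat_nonneg k]
  have key : ∀ n : ℕ, ((n+1)! : ℤ) ≤ a (n + 1) * a n := by
    intro n
    induction n with
    | zero => simp [ha0, ha1]
    | succ k ih =>
      have hfac : (((k+2)! : ℤ)) = (k+2) * ((k+1)! : ℤ) := by
        push_cast [Nat.factorial_succ]; ring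
      have h1 := hpos (k+1)
      have h2 := hpos k
      have h3 := hmono k
      have hf : (0:ℤ) ≤ ((k+1)! : ℤ) := by positivity
      rw [ha k, hfac]
      nlinarith [mul_le_mul_of_nonneg_left ih (by positivity : (0:ℤ) ≤ (k:ℤ)+2)]
  intro n
  have hsq : (n ! : ℝ) ≤ ((a n : ℝ))^2 := by
    match n with
    | 0 => simp [ha0]
    | (k+1) =>
      have := key k
      have h1 := hpos (k+1)
      have h2 := hpos k
      have h3 := hmono k
      have : ((k+1)! : ℤ) ≤ a (k+1) * a (k+1) := le_trans this (by nlinarith)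
      have := (Int.cast_le (R := ℝ)).2 this
      push_cast at this ⊢
      nlinarith
  calc Real.sqrt (n ! : ℝ) ≤ Real.sqrt (((a n : ℝ))^2) := Real.sqrt_le_sqrt hsq
    _ = |((a n : ℝ))| := by rw [Real.sqrt_sq_eq_abs]
    _ = (a n : ℝ) := abs_of_nonneg (by exact_mod_cast le_trans zero_le_one (hpos n))
end

section
/- The exponential generating function F(x) = Σ_{n≥0} a_n x^n / n! of the sequence (a_n) equals exp(x + x²/2), as formal power series. -/
open Nat

open PowerSeries

private noncomputable def myg : ℚ⟦X⟧ :=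
  PowerSeries.X + PowerSeries.C (R := ℚ) (1 / 2) * PowerSeries.X ^ 2

private noncomputable def myS (m : ℕ) : ℚ⟦X⟧ :=
  ∑ k ∈ Finset.range (m + 1), PowerSeries.C (R := ℚ) ((k ! : ℚ)⁻¹) * myg ^ k

private lemma coeff_myg_pow_eq_zero {n k : ℕ} (h : n < k) :
    (PowerSeries.coeff (R := ℚ) n) (myg ^ k) = 0 := by
  have hdvd : (PowerSeries.X : ℚ⟦X⟧) ^ k ∣ myg ^ k := by
    apply pow_dvd_pow_of_dvd
    exact ⟨1 + PowerSeries.C (R := ℚ) (1 / 2) * PowerSeries.X, by rw [myg]; ring⟩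
  exact PowerSeries.X_pow_dvd_iff.mp hdvd n h

private lemma coeff_myS_stable {n m : ℕ} (h : n ≤ m) :
    (PowerSeries.coeff (R := ℚ) n) (myS m) = (PowerSeries.coeff (R := ℚ) n) (myS n) := by
  rw [myS, myS, map_sum, map_sum]
  symm
  apply Finset.sum_subset
  · exact Finset.range_subset_range.mpr (by omega)
  · intro k hk hk'
    simp only [Finset.mem_range] at hk hk'
    rw [PowerSeries.coeff_C_mul, coeff_myg_pow_eq_zero (by omega), mul_zero]

private lemma deriv_myg : d⁄dX ℚ myg = 1 + PowerSeries.X := by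
  rw [myg, map_add, PowerSeries.derivative_X, sq]
  rw [Derivation.leibniz, Derivation.leibniz, PowerSeries.derivative_C,
    PowerSeries.derivative_X]
  simp only [smul_eq_mul, smul_zero, mul_one, zero_add, mul_zero, add_zero]
  have : (PowerSeries.C (R := ℚ) (1/2)) * (PowerSeries.X + PowerSeries.X) =
      PowerSeries.X := by
    rw [← two_mul, ← mul_assoc, ← map_ofNat (PowerSeries.C (R := ℚ)) 2, ← map_mul]
    norm_num
  rw [this]

private lemma deriv_myS (m : ℕ) :
    d⁄dX ℚ (myS (m + 1)) = (1 + PowerSeries.X) * myS m := by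
  rw [myS, map_sum, Finset.sum_range_succ', myS, Finset.mul_sum]
  have h0 : d⁄dX ℚ (PowerSeries.C (R := ℚ) ((0! : ℚ)⁻¹) * myg ^ 0) = 0 := by
    simp
  rw [h0, add_zero]
  apply Finset.sum_congr rfl
  intro k _
  rw [Derivation.leibniz, PowerSeries.derivative_C, smul_zero, add_zero,
    Derivation.leibniz_pow, deriv_myg]
  simp only [Nat.add_sub_cancel, smul_eq_mul, smul_smul, nsmul_eq_mul]
  push_cast
  have hfac : (PowerSeries.C (R := ℚ) (((k+1)! : ℚ)⁻¹)) * ((k : ℚ⟦X⟧) + 1) =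
      PowerSeries.C (R := ℚ) ((k ! : ℚ)⁻¹) := by
    rw [show ((k : ℚ⟦X⟧) + 1) = ((k+1 : ℕ) : ℚ⟦X⟧) by push_cast; ring]
    rw [← map_natCast (PowerSeries.C (R := ℚ)) (k+1), ← map_mul]
    congr 1
    rw [Nat.factorial_succ]
    push_cast
    rw [mul_comm (k+1 : ℚ) _, mul_inv]
    field_simp
  calc PowerSeries.C (R := ℚ) (((k+1)! : ℚ)⁻¹) * (((k : ℚ⟦X⟧) + 1) *
        (myg ^ k * (1 + PowerSeries.X)))
      = (PowerSeries.C (R := ℚ) (((k+1)! : ℚ)⁻¹) * ((k : ℚ⟦X⟧) + 1)) *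
        (myg ^ k * (1 + PowerSeries.X)) := by ring
    _ = (1 + PowerSeries.X) * (PowerSeries.C (R := ℚ) ((k ! : ℚ)⁻¹) * myg ^ k) := by
        rw [hfac]; ring

private lemma key_s7 (a : ℕ → ℤ) (ha0 : a 0 = 1) (ha1 : a 1 = 1)
    (ha : ∀ n : ℕ, a (n + 2) = a (n + 1) + (n + 1) * a n) :
    ∀ n : ℕ, (a n : ℚ) / (n ! : ℚ) = (PowerSeries.coeff (R := ℚ) n) (myS n) := by
  have main : ∀ n : ℕ, (a n : ℚ) / (n ! : ℚ) = (PowerSeries.coeff (R := ℚ) n) (myS n) ∧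
      (a (n+1) : ℚ) / ((n+1)! : ℚ) = (PowerSeries.coeff (R := ℚ) (n+1)) (myS (n+1)) := by
    intro n
    induction n with
    | zero =>
      constructor
      · simp [myS, ha0, PowerSeries.coeff_zero_eq_constantCoeff, myg]
      · rw [ha1, myS]
        rw [map_sum]
        rw [Finset.sum_range_succ, Finset.sum_range_one]
        simp [myg, PowerSeries.coeff_one, PowerSeries.coeff_X_pow]
    | succ n ih =>
      refine ⟨ih.2, ?_⟩
      have hm := ih.1
      have hm1 := ih.2
      -- use the derivative relation
      have hd := deriv_myS (n + 1)
      have hcoeff := congrArg (PowerSeries.coeff (R := ℚ) (n+1)) hd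
      rw [PowerSeries.coeff_derivative] at hcoeff
      rw [add_mul, one_mul, map_add, PowerSeries.coeff_succ_X_mul] at hcoeff
      rw [coeff_myS_stable (by omega : n ≤ n + 1)] at hcoeff
      rw [← hm, ← hm1] at hcoeff
      -- hcoeff : coeff (n+2) (myS (n+2)) * (n+1+1) = a(n+1)/(n+1)! + a n/n!
      have hne : ((n : ℚ) + 1 + 1) ≠ 0 := by positivity
      have h2 : (PowerSeries.coeff (R := ℚ) (n+1+1)) (myS (n+1+1)) =
          ((a (n+1) : ℚ) / ((n+1)! : ℚ) + (a n : ℚ) / (n ! : ℚ)) / ((n:ℚ)+1+1) := by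
        rw [← hcoeff]
        push_cast
        field_simp
      rw [h2, ha n]
      have hfn : (n ! : ℚ) ≠ 0 := Nat.cast_ne_zero.mpr n.factorial_ne_zero
      have hfn1 : ((n+1)! : ℚ) ≠ 0 := Nat.cast_ne_zero.mpr (n+1).factorial_ne_zero
      have e1 : ((n+2)! : ℚ) = ((n:ℚ)+2) * ((n+1)! : ℚ) := by
        rw [Nat.factorial_succ]; push_cast; ring
      have e2 : ((n+1)! : ℚ) = ((n:ℚ)+1) * (n ! : ℚ) := by
        rw [Nat.factorial_succ]; push_cast; ring
      push_cast
      rw [show ((n:ℚ)+1+1) = (n:ℚ)+2 by ring] at *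
      rw [e1, e2]
      field_simp
  exact fun n => (main n).1

/-- The exponential generating function `F(x) = Σ aₙ xⁿ/n!` equals `exp(x + x²/2)` as a formal
power series over `ℚ`: since `g = X + X²/2` has positive order, the coefficient of `xⁿ` in
`exp(g) = Σₖ gᵏ/k!` equals the corresponding coefficient of the partial sum `Σ_{k ≤ n} gᵏ/k!`. -/
theorem stmt_7 (a : ℕ → ℤ) (ha0 : a 0 = 1) (ha1 : a 1 = 1)
    (ha : ∀ n : ℕ, a (n + 2) = a (n + 1) + (n + 1) * a n) :
    ∀ n : ℕ,
      (PowerSeries.coeff (R := ℚ) n) (PowerSeries.mk fun m => (a m : ℚ) / (m ! : ℚ)) =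
      (PowerSeries.coeff (R := ℚ) n)
        (∑ k ∈ Finset.range (n + 1),
          PowerSeries.C (R := ℚ) ((k ! : ℚ)⁻¹) *
            (PowerSeries.X + PowerSeries.C (R := ℚ) (1 / 2) * PowerSeries.X ^ 2) ^ k) := by
  intro n
  rw [PowerSeries.coeff_mk]
  exact key_s7 a ha0 ha1 ha n
end

section
/- If p is an odd prime and p divides n, then a_n ≡ 1 (mod p). -/
private def dd : ℕ → ℕ
  | 0 => 1
  | (k+1) => (2*k+1) * dd k

private def ff (n : ℕ) : ℕ := ∑ k ∈ Finset.range (n+1), n.choose (2*k) * dd k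

private lemma term_rec (n k : ℕ) :
    (n+2).choose (2*(k+1)) * dd (k+1)
      = (n+1).choose (2*(k+1)) * dd (k+1) + (n+1) * (n.choose (2*k) * dd k) := by
  have h1 : (n+2).choose (2*k+2) = (n+1).choose (2*k+1) + (n+1).choose (2*k+2) :=
    Nat.choose_succ_succ (n+1) (2*k+1)
  have h2 : (n+1).choose (2*k+1) * (2*k+1) = (n+1) * n.choose (2*k) :=
    (Nat.add_one_mul_choose_eq n (2*k)).symm
  have h3 : dd (k+1) = (2*k+1) * dd k := rfl
  have h4 : 2*(k+1) = 2*k+2 := by ring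
  rw [h4, h1, h3, Nat.add_mul]
  have h5 : (n+1).choose (2*k+1) * ((2*k+1) * dd k) = (n+1) * (n.choose (2*k) * dd k) := by
    rw [← mul_assoc, h2, mul_assoc]
  omega

private lemma ff_rec (n : ℕ) : ff (n+2) = ff (n+1) + (n+1) * ff n := by
  have e1 : ff (n+2)
      = (∑ k ∈ Finset.range (n+2), (n+2).choose (2*(k+1)) * dd (k+1)) + 1 := by
    rw [ff, Finset.sum_range_succ']
    norm_num [dd]
  have e2 : (∑ k ∈ Finset.range (n+2), (n+1).choose (2*(k+1)) * dd (k+1)) + 1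
      = ff (n+1) := by
    have h0 : (fun k => (n+1).choose (2*k) * dd k) 0 = 1 := by norm_num [dd]
    calc (∑ k ∈ Finset.range (n+2), (n+1).choose (2*(k+1)) * dd (k+1)) + 1
        = ∑ k ∈ Finset.range (n+3), (n+1).choose (2*k) * dd k := by
          rw [Finset.sum_range_succ' (fun k => (n+1).choose (2*k) * dd k) (n+2)]
          norm_num [dd]
      _ = ff (n+1) := by
          rw [ff, Finset.sum_range_succ (fun k => (n+1).choose (2*k) * dd k) (n+2)]
          rw [Nat.choose_eq_zero_of_lt (show n+1 < 2*(n+2) by omega)]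
          ring
  have e3 : ∑ k ∈ Finset.range (n+2), n.choose (2*k) * dd k = ff n := by
    rw [ff, Finset.sum_range_succ (fun k => n.choose (2*k) * dd k) (n+1)]
    rw [Nat.choose_eq_zero_of_lt (show n < 2*(n+1) by omega)]
    ring
  calc ff (n+2)
      = (∑ k ∈ Finset.range (n+2), (n+2).choose (2*(k+1)) * dd (k+1)) + 1 := e1
    _ = (∑ k ∈ Finset.range (n+2),
          ((n+1).choose (2*(k+1)) * dd (k+1) + (n+1) * (n.choose (2*k) * dd k))) + 1 := by
        rw [Finset.sum_congr rfl (fun k _ => term_rec n k)]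
    _ = ((∑ k ∈ Finset.range (n+2), (n+1).choose (2*(k+1)) * dd (k+1)) + 1)
          + (n+1) * (∑ k ∈ Finset.range (n+2), n.choose (2*k) * dd k) := by
        rw [Finset.sum_add_distrib, ← Finset.mul_sum]; ring
    _ = ff (n+1) + (n+1) * ff n := by rw [e2, e3]

private lemma a_eq_ff (a : ℕ → ℤ) (ha0 : a 0 = 1) (ha1 : a 1 = 1)
    (ha : ∀ n : ℕ, a (n + 2) = a (n + 1) + (n + 1) * a n) :
    ∀ n, a n = (ff n : ℤ) := by
  have key : ∀ n, a n = (ff n : ℤ) ∧ a (n+1) = (ff (n+1) : ℤ) := by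
    intro n
    induction n with
    | zero =>
      constructor
      · simpa [ff, dd] using ha0
      · simpa [ff, dd, Finset.sum_range_succ] using ha1
    | succ m ih =>
      refine ⟨ih.2, ?_⟩
      rw [ha m, ih.1, ih.2, ff_rec m]
      push_cast
      ring
  exact fun n => (key n).1

private lemma dvd_dd (p : ℕ) (hp : p.Prime) (hodd : p ≠ 2) :
    ∀ k, p ≤ 2*k → p ∣ dd k := by
  intro k
  induction k with
  | zero => intro h; have := hp.two_le; omega
  | succ m ih =>
    intro h
    by_cases hm : p ≤ 2*m
    · exact Dvd.dvd.mul_left (ih hm) _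
    · obtain ⟨t, ht⟩ := hp.odd_of_ne_two hodd
      have hpe : p = 2*m+1 := by omega
      rw [show dd (m+1) = (2*m+1) * dd m from rfl, ← hpe]
      exact Dvd.dvd.mul_right dvd_rfl _

private lemma dvd_choose' (p n k : ℕ) (hp : p.Prime) (hpn : p ∣ n)
    (hk0 : 0 < k) (hkp : k < p) : p ∣ n.choose k := by
  rcases Nat.eq_zero_or_pos n with rfl | hn
  · simp [Nat.choose_eq_zero_of_lt hk0]
  · obtain ⟨m, rfl⟩ : ∃ m, n = m + 1 := ⟨n - 1, by omega⟩
    obtain ⟨j, rfl⟩ : ∃ j, k = j + 1 := ⟨k - 1, by omega⟩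
    have h := Nat.add_one_mul_choose_eq m j
    have hd : p ∣ (m+1).choose (j+1) * (j+1) := by
      rw [← h]; exact Dvd.dvd.mul_right hpn _
    rcases (Nat.Prime.dvd_mul hp).mp hd with h' | h'
    · exact h'
    · exfalso
      have := Nat.le_of_dvd (by omega) h'
      omega

theorem stmt_8 (a : ℕ → ℤ) (ha0 : a 0 = 1) (ha1 : a 1 = 1)
    (ha : ∀ n : ℕ, a (n + 2) = a (n + 1) + (n + 1) * a n)
    (p : ℕ) (hp : p.Prime) (hodd : p ≠ 2) (n : ℕ) (hpn : p ∣ n) :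
    a n ≡ 1 [ZMOD p] := by
  rw [← ZMod.intCast_eq_intCast_iff]
  rw [a_eq_ff a ha0 ha1 ha n]
  push_cast
  rw [ff]
  push_cast
  rw [Finset.sum_eq_single_of_mem 0 (Finset.mem_range.mpr (by omega))]
  · simp [dd]
  · intro k hk hk0
    rcases Nat.lt_or_ge (2*k) p with hlt | hge
    · have h0 : ((n.choose (2*k) : ℕ) : ZMod p) = 0 := by
        rw [ZMod.natCast_eq_zero_iff]
        exact dvd_choose' p n (2*k) hp hpn (by omega) hlt
      rw [h0]; ring
    · have h0 : ((dd k : ℕ) : ZMod p) = 0 := by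
        rw [ZMod.natCast_eq_zero_iff]
        exact dvd_dd p hp hodd k hge
      rw [h0]; ring
end

section
/- For every n ≥ 1, d_n := gcd(a_n, a_{n-1}) is a power of 2. -/
open Finset

def df9 : ℕ → ℕ
  | 0 => 1
  | k+1 => (2*k+1) * df9 k

def S9 (n : ℕ) : ℕ := ∑ k ∈ range (n+1), n.choose (2*k) * df9 k

lemma S9rec (n : ℕ) : S9 (n+2) = S9 (n+1) + (n+1) * S9 n := by
  have h1 : S9 (n+2) = (∑ k ∈ range (n+2), (n+2).choose (2*(k+1)) * df9 (k+1)) + 1 := by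
    rw [S9, Finset.sum_range_succ']
    simp [show df9 0 = 1 from rfl]
  have h2 : ∀ k, (n+2).choose (2*(k+1)) * df9 (k+1) =
      (n+1).choose (2*(k+1)) * df9 (k+1) + (n+1) * (n.choose (2*k) * df9 k) := by
    intro k
    have e : 2*(k+1) = (2*k+1)+1 := by ring
    rw [e, Nat.choose_succ_succ]
    have e2 : df9 (k+1) = (2*k+1) * df9 k := rfl
    rw [add_mul, e2]
    have hh := Nat.add_one_mul_choose_eq n (2*k)
    have e3 : (n+1).choose (2*k+1) * ((2*k+1) * df9 k)
        = ((n+1) * n.choose (2*k)) * df9 k := by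
      rw [hh]; ring
    rw [e3]
    ring
  rw [h1]
  simp_rw [h2, Finset.sum_add_distrib]
  have h3 : (∑ k ∈ range (n+2), (n+1).choose (2*(k+1)) * df9 (k+1)) + 1 = S9 (n+1) := by
    rw [Finset.sum_range_succ]
    have : (n+1).choose (2*(n+1+1)) = 0 := Nat.choose_eq_zero_of_lt (by omega)
    rw [this, S9]
    conv_rhs => rw [Finset.sum_range_succ']
    simp [show df9 0 = 1 from rfl]
  have h4 : (∑ k ∈ range (n+2), (n+1) * (n.choose (2*k) * df9 k)) = (n+1) * S9 n := by
    rw [Finset.sum_range_succ]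
    have : n.choose (2*(n+1)) = 0 := Nat.choose_eq_zero_of_lt (by omega)
    rw [this, S9, Finset.mul_sum]
    simp
  omega

lemma a9_eq (a : ℕ → ℤ) (ha0 : a 0 = 1) (ha1 : a 1 = 1)
    (ha : ∀ n : ℕ, a (n + 2) = a (n + 1) + (n + 1) * a n) : ∀ n, a n = (S9 n : ℤ) := by
  have key : ∀ n, a n = (S9 n : ℤ) ∧ a (n+1) = (S9 (n+1) : ℤ) := by
    intro n
    induction n with
    | zero =>
      constructor
      · rw [ha0]; norm_num [S9, show df9 0 = 1 from rfl]
      · rw [ha1]; rw [S9]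
        rw [Finset.sum_range_succ, Finset.sum_range_succ, Finset.sum_range_zero]
        norm_num [show df9 0 = 1 from rfl]
    | succ n ih =>
      refine ⟨ih.2, ?_⟩
      rw [ha n, ih.1, ih.2, S9rec]
      push_cast
      ring
  exact fun n => (key n).1

lemma dvd_Sp (p : ℕ) (hp : p.Prime) (hodd : p ≠ 2) : (p : ℤ) ∣ (S9 p : ℤ) - 1 := by
  have hodd' : Odd p := hp.odd_of_ne_two hodd
  have h1 : S9 p = (∑ k ∈ range p, p.choose (2*(k+1)) * df9 (k+1)) + 1 := by
    rw [S9, Finset.sum_range_succ']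
    simp [show df9 0 = 1 from rfl]
  have h2 : p ∣ ∑ k ∈ range p, p.choose (2*(k+1)) * df9 (k+1) := by
    apply Finset.dvd_sum
    intro k _
    apply Dvd.dvd.mul_right
    rcases lt_or_ge (2*(k+1)) p with h | h
    · exact Nat.Prime.dvd_choose_self hp (by omega) h
    · have : 2*(k+1) ≠ p := by
        intro hc
        exact (Nat.not_odd_iff_even.mpr ⟨k+1, by omega⟩) (hc ▸ hodd')
      have : p < 2*(k+1) := by omega
      simp [Nat.choose_eq_zero_of_lt this]
  rw [h1]
  have e : ((∑ k ∈ range p, p.choose (2*(k+1)) * df9 (k+1)) + 1 : ℕ) =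
      ((∑ k ∈ range p, p.choose (2*(k+1)) * df9 (k+1) : ℕ) : ℤ) + 1 := by push_cast; ring
  rw [e, add_sub_cancel_right]
  exact_mod_cast h2

lemma dvd_Sp1 (p : ℕ) (hp : p.Prime) (hodd : p ≠ 2) : (p : ℤ) ∣ (S9 (p+1) : ℤ) - 1 := by
  have hodd' : Odd p := hp.odd_of_ne_two hodd
  have h1 : S9 (p+1) = (∑ k ∈ range (p+1), (p+1).choose (2*(k+1)) * df9 (k+1)) + 1 := by
    rw [S9, Finset.sum_range_succ']
    simp [show df9 0 = 1 from rfl]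
  have h2 : p ∣ ∑ k ∈ range (p+1), (p+1).choose (2*(k+1)) * df9 (k+1) := by
    apply Finset.dvd_sum
    intro k _
    rcases lt_or_ge (2*(k+1)) (p+1) with h | h
    · -- 2(k+1) ≤ p, and ≠ p by parity, so 2(k+1) < p
      have hne : 2*(k+1) ≠ p := by
        intro hc
        exact (Nat.not_odd_iff_even.mpr ⟨k+1, by omega⟩) (hc ▸ hodd')
      have hlt : 2*(k+1) < p := by omega
      apply Dvd.dvd.mul_right
      have e : 2*(k+1) = (2*k+1)+1 := by ring
      rw [e, Nat.choose_succ_succ]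
      exact dvd_add (Nat.Prime.dvd_choose_self hp (by omega) (by omega))
        (Nat.Prime.dvd_choose_self hp (by omega) (by omega))
    · rcases eq_or_lt_of_le h with h | h
      · -- 2*(k+1) = p+1, so p = 2k+1, and df9 (k+1) = p * df9 k
        apply Dvd.dvd.mul_left
        have : df9 (k+1) = (2*k+1) * df9 k := rfl
        rw [this, show 2*k+1 = p by omega]
        exact Dvd.intro _ rfl
      · apply Dvd.dvd.mul_right
        simp [Nat.choose_eq_zero_of_lt h]
  rw [h1]
  have e : ((∑ k ∈ range (p+1), (p+1).choose (2*(k+1)) * df9 (k+1)) + 1 : ℕ) =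
      ((∑ k ∈ range (p+1), (p+1).choose (2*(k+1)) * df9 (k+1) : ℕ) : ℤ) + 1 := by push_cast; ring
  rw [e, add_sub_cancel_right]
  exact_mod_cast h2

lemma periodic9 (a : ℕ → ℤ) (ha0 : a 0 = 1) (ha1 : a 1 = 1)
    (ha : ∀ n : ℕ, a (n + 2) = a (n + 1) + (n + 1) * a n)
    (p : ℕ) (hp : p.Prime) (hodd : p ≠ 2) : ∀ n, (p:ℤ) ∣ a (n + p) - a n := by
  have hS := a9_eq a ha0 ha1 ha
  have key : ∀ n, (p:ℤ) ∣ a (n + p) - a n ∧ (p:ℤ) ∣ a (n + 1 + p) - a (n+1) := by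
    intro n
    induction n with
    | zero =>
      constructor
      · rw [show 0 + p = p from by omega, ha0, hS p]; exact dvd_Sp p hp hodd
      · rw [show 0 + 1 + p = p + 1 from by omega, ha1, hS (p+1)]; exact dvd_Sp1 p hp hodd
    | succ n ih =>
      refine ⟨ih.2, ?_⟩
      have e1 : n + 1 + 1 + p = (n + p) + 2 := by omega
      rw [e1, ha (n + p), ha n]
      obtain ⟨c1, hc1⟩ := ih.1
      obtain ⟨c2, hc2⟩ := ih.2
      refine ⟨c2 + ((n:ℤ)+1) * c1 + a (n + p), ?_⟩
      have e2 : n + p + 1 = n + 1 + p := by omega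
      rw [e2]
      push_cast
      linear_combination hc2 + ((n:ℤ)+1) * hc1
  exact fun n => (key n).1

lemma no_odd9 (a : ℕ → ℤ) (ha0 : a 0 = 1) (ha1 : a 1 = 1)
    (ha : ∀ n : ℕ, a (n + 2) = a (n + 1) + (n + 1) * a n)
    (p : ℕ) (hp : p.Prime) (hodd : p ≠ 2) (n : ℕ) (hn : 1 ≤ n)
    (h1 : (p:ℤ) ∣ a n) (h2 : (p:ℤ) ∣ a (n-1)) : False := by
  have fwd : ∀ j, (p:ℤ) ∣ a (n - 1 + j) ∧ (p:ℤ) ∣ a (n - 1 + j + 1) := by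
    intro j
    induction j with
    | zero => exact ⟨h2, by rw [show n - 1 + 0 + 1 = n from by omega]; exact h1⟩
    | succ j ih =>
      refine ⟨ih.2, ?_⟩
      rw [show n - 1 + (j+1) + 1 = (n - 1 + j) + 2 from by omega, ha]
      exact dvd_add ih.2 (Dvd.dvd.mul_left ih.1 _)
  have hle : n - 1 ≤ p * n := by
    have h2 := hp.two_le
    have : n ≤ p * n := Nat.le_mul_of_pos_left n (by omega)
    omega
  have hpn : (p:ℤ) ∣ a (p * n) := by
    have e : p * n = n - 1 + (p * n - (n-1)) := by omega
    rw [e]; exact (fwd _).1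
  have hper : ∀ m, (p:ℤ) ∣ a (p * m) - 1 := by
    intro m
    induction m with
    | zero => simp [ha0]
    | succ m ih =>
      have e : p * (m+1) = p * m + p := by ring
      rw [e]
      have e2 : a (p*m + p) - 1 = (a (p*m+p) - a (p*m)) + (a (p*m) - 1) := by ring
      rw [e2]
      exact dvd_add (periodic9 a ha0 ha1 ha p hp hodd (p*m)) ih
  have hone : (p:ℤ) ∣ 1 := by
    have := dvd_sub hpn (hper n)
    simpa using this
  have : p ∣ 1 := by exact_mod_cast hone
  have := Nat.le_of_dvd one_pos this
  have := hp.two_le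
  omega

theorem stmt_9 (a : ℕ → ℤ) (ha0 : a 0 = 1) (ha1 : a 1 = 1)
    (ha : ∀ n : ℕ, a (n + 2) = a (n + 1) + (n + 1) * a n) :
    ∀ n : ℕ, 1 ≤ n → ∃ k : ℕ, Int.gcd (a n) (a (n - 1)) = 2 ^ k := by
  intro n hn
  have hg0 : Int.gcd (a n) (a (n-1)) ≠ 0 := by
    intro h
    rw [Int.gcd_eq_zero_iff] at h
    exact no_odd9 a ha0 ha1 ha 3 (by norm_num) (by norm_num) n hn
      (by rw [h.1]; exact dvd_zero _) (by rw [h.2]; exact dvd_zero _)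
  refine ⟨(Int.gcd (a n) (a (n-1))).primeFactorsList.length, ?_⟩
  apply Nat.eq_prime_pow_of_unique_prime_dvd hg0
  intro q hq hdvd
  by_contra hne
  have hq1 : (q:ℤ) ∣ a n :=
    dvd_trans (Int.natCast_dvd_natCast.mpr hdvd) (Int.gcd_dvd_left _ _)
  have hq2 : (q:ℤ) ∣ a (n-1) :=
    dvd_trans (Int.natCast_dvd_natCast.mpr hdvd) (Int.gcd_dvd_right _ _)
  exact no_odd9 a ha0 ha1 ha q hq hne n hn hq1 hq2
end

section
/- For every n ≥ 1, Σ_{m+r=2n} (-1)^r · binom(2n, m) · a_m · a_r = (2n)!/n! = 2^n · (2n-1)!!. -/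
open Nat

private def Tsum (a : ℕ → ℤ) (k : ℕ) : ℤ :=
  ∑ m ∈ Finset.range (k + 1), (-1 : ℤ) ^ m * (k.choose m) * a m * a (k - m)

private lemma choose_aux (n m : ℕ) : (n + 1).choose m * (n + 1 - m) = (n + 1) * n.choose m := by
  rw [← Nat.choose_succ_right_eq, ← Nat.add_one_mul_choose_eq]

private lemma step (a : ℕ → ℤ) (ha0 : a 0 = 1) (ha1 : a 1 = 1)
    (ha : ∀ n : ℕ, a (n + 2) = a (n + 1) + (n + 1) * a n) (k : ℕ) :
    Tsum a (k + 2) = 2 * (k + 1) * Tsum a k := by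
  have ha' : ∀ m : ℕ, a (m + 1) = a m + (m : ℤ) * a (m - 1) := by
    intro m
    match m with
    | 0 => simp [ha0, ha1]
    | m + 1 => push_cast [ha m]; ring
  -- combined form
  have main : Tsum a (k + 2) =
      ∑ m ∈ Finset.range (k + 2),
        (-1 : ℤ) ^ m * ((k + 1).choose m) * (a m * a (k + 2 - m) - a (m + 1) * a (k + 1 - m)) := by
    unfold Tsum
    rw [Finset.sum_range_succ' (fun m => (-1 : ℤ) ^ m * ((k + 2).choose m) * a m * a (k + 2 - m))]
    have pascal : ∀ m ∈ Finset.range (k + 2),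
        (-1 : ℤ) ^ (m + 1) * ((k + 2).choose (m + 1)) * a (m + 1) * a (k + 2 - (m + 1))
        = (-(-1 : ℤ) ^ m * ((k + 1).choose m) * a (m + 1) * a (k + 1 - m))
          + (-1 : ℤ) ^ (m + 1) * ((k + 1).choose (m + 1)) * a (m + 1) * a (k + 1 - m) := by
      intro m hm
      rw [Nat.choose_succ_succ (k + 1) m]
      have e : k + 2 - (m + 1) = k + 1 - m := Nat.succ_sub_succ _ _
      rw [e]
      push_cast [Nat.succ_eq_add_one]
      ring
    rw [Finset.sum_congr rfl pascal, Finset.sum_add_distrib]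
    -- second piece: reindex
    have reidx : (∑ m ∈ Finset.range (k + 2),
        (-1 : ℤ) ^ (m + 1) * ((k + 1).choose (m + 1)) * a (m + 1) * a (k + 1 - m))
        = (∑ m ∈ Finset.range (k + 2),
            (-1 : ℤ) ^ m * ((k + 1).choose m) * a m * a (k + 2 - m)) - a (k + 2) := by
      have h3 : (∑ m ∈ Finset.range (k + 3),
          (-1 : ℤ) ^ m * ((k + 1).choose m) * a m * a (k + 2 - m))
          = (∑ m ∈ Finset.range (k + 2),
              (-1 : ℤ) ^ (m + 1) * ((k + 1).choose (m + 1)) * a (m + 1) * a (k + 2 - (m + 1)))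
            + (-1 : ℤ) ^ 0 * ((k + 1).choose 0) * a 0 * a (k + 2 - 0) :=
        Finset.sum_range_succ' _ _
      have h4 : (∑ m ∈ Finset.range (k + 3),
          (-1 : ℤ) ^ m * ((k + 1).choose m) * a m * a (k + 2 - m))
          = (∑ m ∈ Finset.range (k + 2),
              (-1 : ℤ) ^ m * ((k + 1).choose m) * a m * a (k + 2 - m))
            + (-1 : ℤ) ^ (k + 2) * ((k + 1).choose (k + 2)) * a (k + 2) * a (k + 2 - (k + 2)) :=
        Finset.sum_range_succ _ _
      rw [Nat.choose_succ_self] at h4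
      simp [ha0, Nat.succ_sub_succ] at h3 h4
      linarith
    rw [reidx]
    have split : ∀ m ∈ Finset.range (k + 2),
        (-1 : ℤ) ^ m * ((k + 1).choose m) * (a m * a (k + 2 - m) - a (m + 1) * a (k + 1 - m))
        = ((-1 : ℤ) ^ m * ((k + 1).choose m) * a m * a (k + 2 - m))
          + (-(-1 : ℤ) ^ m * ((k + 1).choose m) * a (m + 1) * a (k + 1 - m)) := by
      intro m hm; ring
    rw [Finset.sum_congr rfl split, Finset.sum_add_distrib]
    simp only [Nat.choose_zero_right, Nat.cast_one, pow_zero, ha0, Nat.sub_zero]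
    ring
  -- pointwise expansion
  have point : ∀ m ∈ Finset.range (k + 2),
      (-1 : ℤ) ^ m * ((k + 1).choose m) * (a m * a (k + 2 - m) - a (m + 1) * a (k + 1 - m))
      = ((-1 : ℤ) ^ m * (((k + 1).choose m * (k + 1 - m) : ℕ)) * a m * a (k - m))
        - (-1 : ℤ) ^ m * (((k + 1).choose m * m : ℕ)) * a (m - 1) * a (k + 1 - m) := by
    intro m hm
    rw [Finset.mem_range] at hm
    have hrec : a (k + 2 - m) = a (k + 1 - m) + ((k + 1 - m : ℕ) : ℤ) * a (k - m) := by
      rcases Nat.lt_or_ge m (k + 1) with h | h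
      · have e1 : k + 2 - m = (k - m) + 2 := by omega
        have e2 : k + 1 - m = (k - m) + 1 := by omega
        rw [e1, e2, ha (k - m)]
        push_cast
        ring
      · have hm1 : m = k + 1 := by omega
        subst hm1
        simp [ha0, ha1]
    rw [hrec, ha' m]
    push_cast
    ring
  rw [main, Finset.sum_congr rfl point, Finset.sum_sub_distrib]
  -- first sum = (k+1) * Tsum a k
  have first : (∑ m ∈ Finset.range (k + 2),
      (-1 : ℤ) ^ m * (((k + 1).choose m * (k + 1 - m) : ℕ)) * a m * a (k - m))
      = (k + 1) * Tsum a k := by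
    rw [Finset.sum_range_succ]
    have last0 : (k + 1).choose (k + 1) * (k + 1 - (k + 1)) = 0 := by simp
    rw [last0]
    have congr1 : ∀ m ∈ Finset.range (k + 1),
        (-1 : ℤ) ^ m * (((k + 1).choose m * (k + 1 - m) : ℕ)) * a m * a (k - m)
        = (k + 1 : ℤ) * ((-1 : ℤ) ^ m * (k.choose m) * a m * a (k - m)) := by
      intro m hm
      rw [choose_aux k m]
      push_cast
      ring
    rw [Finset.sum_congr rfl congr1, ← Finset.mul_sum]
    simp [Tsum]
  -- second sum = -(k+1) * Tsum a k
  have second : (∑ m ∈ Finset.range (k + 2),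
      (-1 : ℤ) ^ m * (((k + 1).choose m * m : ℕ)) * a (m - 1) * a (k + 1 - m))
      = -((k + 1) * Tsum a k) := by
    rw [Finset.sum_range_succ' (fun m => (-1 : ℤ) ^ m * (((k + 1).choose m * m : ℕ)) * a (m - 1) * a (k + 1 - m))]
    have congr2 : ∀ m ∈ Finset.range (k + 1),
        (-1 : ℤ) ^ (m + 1) * (((k + 1).choose (m + 1) * (m + 1) : ℕ)) * a (m + 1 - 1) * a (k + 1 - (m + 1))
        = -((k + 1 : ℤ) * ((-1 : ℤ) ^ m * (k.choose m) * a m * a (k - m))) := by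
      intro m hm
      have hc : (k + 1).choose (m + 1) * (m + 1) = (k + 1) * k.choose m := by
        rw [← Nat.add_one_mul_choose_eq]
      rw [hc]
      have e1 : m + 1 - 1 = m := rfl
      have e2 : k + 1 - (m + 1) = k - m := by omega
      rw [e1, e2]
      push_cast
      ring
    rw [Finset.sum_congr rfl congr2]
    simp [Finset.sum_neg_distrib, ← Finset.mul_sum, Tsum]
  rw [first, second]
  ring

private lemma Tval (a : ℕ → ℤ) (ha0 : a 0 = 1) (ha1 : a 1 = 1)
    (ha : ∀ n : ℕ, a (n + 2) = a (n + 1) + (n + 1) * a n) (n : ℕ) :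
    Tsum a (2 * n) = 2 ^ n * ((2 * n - 1)‼ : ℕ) := by
  induction n with
  | zero => simp [Tsum, ha0]
  | succ n ih =>
    have h2 : 2 * (n + 1) = 2 * n + 2 := by ring
    rw [h2, step a ha0 ha1 ha (2 * n), ih]
    have hd : (2 * n + 2 - 1)‼ = (2 * n + 1) * (2 * n - 1)‼ := by
      have h : 2 * n + 2 - 1 = 2 * n + 1 := by omega
      rw [h, Nat.doubleFactorial_add_one]
    rw [hd]
    push_cast
    ring

private lemma natfact (n : ℕ) : (2 * n)! = n ! * (2 ^ n * (2 * n - 1)‼) := by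
  cases n with
  | zero => simp
  | succ n =>
    have e : 2 * (n + 1) = (2 * n + 1) + 1 := by ring
    rw [e, Nat.factorial_eq_mul_doubleFactorial]
    have h1 : 2 * n + 1 + 1 = 2 * (n + 1) := by ring
    rw [h1, Nat.doubleFactorial_two_mul]
    have h3 : 2 * (n + 1) - 1 = 2 * n + 1 := by omega
    rw [h3]
    ring

theorem stmt_11 (a : ℕ → ℤ) (ha0 : a 0 = 1) (ha1 : a 1 = 1)
    (ha : ∀ n : ℕ, a (n + 2) = a (n + 1) + (n + 1) * a n) :
    ∀ n : ℕ, 1 ≤ n →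
      (∑ m ∈ Finset.range (2 * n + 1),
          (-1 : ℤ) ^ (2 * n - m) * ((2 * n).choose m) * a m * a (2 * n - m))
        = ((2 * n)! / n ! : ℕ) ∧
      (((2 * n)! / n ! : ℕ) : ℤ) = 2 ^ n * ((2 * n - 1)‼ : ℕ) := by
  intro n hn
  have hdiv : (2 * n)! / n ! = 2 ^ n * (2 * n - 1)‼ := by
    rw [natfact n, Nat.mul_div_cancel_left _ (Nat.factorial_pos n)]
  have hsign : ∀ m ∈ Finset.range (2 * n + 1),
      (-1 : ℤ) ^ (2 * n - m) * ((2 * n).choose m) * a m * a (2 * n - m)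
      = (-1 : ℤ) ^ m * ((2 * n).choose m) * a m * a (2 * n - m) := by
    intro m hm
    rw [Finset.mem_range] at hm
    have hm' : (2 * n - m) + m = 2 * n := by omega
    have h1 : (-1 : ℤ) ^ (2 * n - m) * (-1 : ℤ) ^ m = 1 := by
      rw [← pow_add, hm']
      simp [pow_mul]
    have h2 : (-1 : ℤ) ^ m * (-1 : ℤ) ^ m = 1 := by
      rw [← pow_add, ← two_mul]
      simp [pow_mul]
    have : (-1 : ℤ) ^ (2 * n - m) = (-1 : ℤ) ^ m := by
      calc (-1 : ℤ) ^ (2 * n - m) = (-1 : ℤ) ^ (2 * n - m) * ((-1 : ℤ) ^ m * (-1 : ℤ) ^ m) := by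
            rw [h2]; ring
        _ = ((-1 : ℤ) ^ (2 * n - m) * (-1 : ℤ) ^ m) * (-1 : ℤ) ^ m := by ring
        _ = (-1 : ℤ) ^ m := by rw [h1]; ring
    rw [this]
  constructor
  · rw [Finset.sum_congr rfl hsign]
    have : (∑ m ∈ Finset.range (2 * n + 1),
        (-1 : ℤ) ^ m * ((2 * n).choose m) * a m * a (2 * n - m)) = Tsum a (2 * n) := rfl
    rw [this, Tval a ha0 ha1 ha n, hdiv]
    push_cast
    ring
  · rw [hdiv]
    push_cast
    ring
end

section
/- For every n ≥ 2, a_{n+6} = 2(n² + 9n + 19)·a_{n+2} − n(n−1)(n+2)(n+5)·a_{n−2}. -/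
theorem stmt_14 (a : ℕ → ℤ) (ha0 : a 0 = 1) (ha1 : a 1 = 1)
    (ha : ∀ n : ℕ, a (n + 2) = a (n + 1) + (n + 1) * a n) :
    ∀ n : ℕ, 2 ≤ n →
      a (n + 6) = 2 * ((n : ℤ) ^ 2 + 9 * n + 19) * a (n + 2)
        - (n : ℤ) * ((n : ℤ) - 1) * ((n : ℤ) + 2) * ((n : ℤ) + 5) * a (n - 2) := by
  intro n hn
  obtain ⟨m, rfl⟩ := Nat.exists_eq_add_of_le hn
  have e : ∀ k : ℕ, a (m + k + 2) = a (m + k + 1) + (m + k + 1) * a (m + k) := by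
    intro k; have := ha (m + k); push_cast at this ⊢; convert this using 3 <;> ring
  have h0 := e 0
  have h1 := e 1
  have h2 := e 2
  have h3 := e 3
  have h4 := e 4
  have h5 := e 5
  have h6 := e 6
  have hidx : 2 + m + 6 = m + 6 + 2 := by ring
  have hidx2 : 2 + m + 2 = m + 2 + 2 := by ring
  have hidx3 : 2 + m - 2 = m := by omega
  rw [hidx, hidx2, hidx3]
  push_cast
  simp only [show m + 6 + 2 = m + 8 from rfl, show m + 6 + 1 = m + 7 from rfl,
    show m + 5 + 2 = m + 7 from rfl, show m + 5 + 1 = m + 6 from rfl,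
    show m + 4 + 2 = m + 6 from rfl, show m + 4 + 1 = m + 5 from rfl,
    show m + 3 + 2 = m + 5 from rfl, show m + 3 + 1 = m + 4 from rfl,
    show m + 2 + 2 = m + 4 from rfl, show m + 2 + 1 = m + 3 from rfl,
    show m + 1 + 2 = m + 3 from rfl, show m + 1 + 1 = m + 2 from rfl,
    show m + 0 + 2 = m + 2 from rfl, show m + 0 + 1 = m + 1 from rfl,
    show m + 0 = m from rfl] at h0 h1 h2 h3 h4 h5 h6 ⊢
  rw [h6, h5, h4, h3, h2, h1, h0]
  ring
end

section
/- The exact power of 2 dividing a_n is 2^{e_n}, where e_n = k if n = 4k or n = 4k+1, e_n = k+1 if n = 4k+2, and e_n = k+2 if n = 4k+3. Equivalently, the 2-adic valuation v_2(a_n) = e_n. -/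
lemma val2_aux (e b : ℕ) (hb : b % 2 = 1) : padicValNat 2 (2 ^ e * b) = e := by
  haveI : Fact (Nat.Prime 2) := ⟨Nat.prime_two⟩
  rw [padicValNat.mul (by positivity) (by omega), padicValNat.prime_pow,
    padicValNat.eq_zero_of_not_dvd (by omega), add_zero]

lemma build_aux (a : ℕ → ℕ) (ha : ∀ n : ℕ, a (n + 2) = a (n + 1) + (n + 1) * a n)
    (k u v : ℕ) (h0 : a (4*k) = 2^k * u) (h1 : a (4*k+1) = 2^k * v)
    (hu : u % 2 = 1) (huv : u % 8 = v % 8) :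
    ∃ w t u' v', a (4*k+2) = 2^(k+1) * w ∧ a (4*k+3) = 2^(k+2) * t ∧
      a (4*k+4) = 2^(k+1) * u' ∧ a (4*k+5) = 2^(k+1) * v' ∧
      w % 2 = 1 ∧ t % 2 = 1 ∧ u' % 2 = 1 ∧ u' % 8 = v' % 8 := by
  have hv : v % 2 = 1 := by omega
  have hmk : (k*u) % 2 = k % 2 := by simp [Nat.mul_mod, hu]
  have hnk : (k*v) % 2 = k % 2 := by simp [Nat.mul_mod, hv]
  obtain ⟨m, hm, hm2⟩ : ∃ m, (4*k+1)*u = 4*m + u ∧ m % 2 = k % 2 := ⟨k*u, by ring, hmk⟩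
  obtain ⟨nn, hn, hn2⟩ : ∃ nn, (2*k+1)*v = 2*nn + v ∧ nn % 2 = k % 2 := ⟨k*v, by ring, hnk⟩
  obtain ⟨w, hw⟩ : ∃ w, v + (4*k+1)*u = 2*w := ⟨(v + (4*k+1)*u)/2, by rw [hm]; omega⟩
  have hw' := hw
  rw [hm] at hw'
  have hww : w % 2 = 1 := by omega
  obtain ⟨t, ht⟩ : ∃ t, w + (2*k+1)*v = 2*t := ⟨(w + (2*k+1)*v)/2, by rw [hn]; omega⟩
  have ht' := ht
  rw [hn] at ht'
  have htt : t % 2 = 1 := by omega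
  obtain ⟨p, hp⟩ : ∃ p, (4*k+3)*w = 4*p + 3*w := ⟨k*w, by ring⟩
  obtain ⟨q, hq⟩ : ∃ q, 8*((k+1)*t) = 8*q := ⟨(k+1)*t, rfl⟩
  have e2 : a (4*k+2) = 2^(k+1) * w := by
    rw [ha (4*k), h0, h1,
      show 2^k*v + (4*k+1)*(2^k*u) = 2^k*(v + (4*k+1)*u) by ring, hw]
    ring
  have e3 : a (4*k+3) = 2^(k+2) * t := by
    have h3 := ha (4*k+1)
    rw [show 4*k+1+2 = 4*k+3 by ring, show 4*k+1+1 = 4*k+2 by ring] at h3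
    rw [h3, e2, h1,
      show 2^(k+1)*w + (4*k+2)*(2^k*v) = 2^(k+1)*(w + (2*k+1)*v) by ring, ht]
    ring
  have e4 : a (4*k+4) = 2^(k+1) * (2*t + (4*k+3)*w) := by
    have h4 := ha (4*k+2)
    rw [show 4*k+2+2 = 4*k+4 by ring, show 4*k+2+1 = 4*k+3 by ring] at h4
    rw [h4, e3, e2]; ring
  have e5 : a (4*k+5) = 2^(k+1) * (2*t + (4*k+3)*w + 8*((k+1)*t)) := by
    have h5 := ha (4*k+3)
    rw [show 4*k+3+2 = 4*k+5 by ring, show 4*k+3+1 = 4*k+4 by ring] at h5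
    rw [h5, e4, e3]; ring
  refine ⟨w, t, 2*t + (4*k+3)*w, 2*t + (4*k+3)*w + 8*((k+1)*t), e2, e3, e4, e5,
    hww, htt, ?_, ?_⟩
  · rw [hp]; omega
  · rw [hp, hq]; omega

theorem stmt_15 (a : ℕ → ℕ) (ha0 : a 0 = 1) (ha1 : a 1 = 1)
    (ha : ∀ n : ℕ, a (n + 2) = a (n + 1) + (n + 1) * a n) :
    ∀ n : ℕ, padicValNat 2 (a n) =
      n / 4 + (if n % 4 = 2 then 1 else if n % 4 = 3 then 2 else 0) := by
  have key : ∀ k, ∃ u v, a (4*k) = 2^k*u ∧ a (4*k+1) = 2^k*v ∧ u % 2 = 1 ∧ u % 8 = v % 8 := by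
    intro k
    induction k with
    | zero => exact ⟨1, 1, by simpa using ha0, by simpa using ha1, rfl, rfl⟩
    | succ k ih =>
      obtain ⟨u, v, h0, h1, hu, huv⟩ := ih
      obtain ⟨w, t, u', v', e2, e3, e4, e5, hw, ht, hu', huv'⟩ :=
        build_aux a ha k u v h0 h1 hu huv
      exact ⟨u', v', by rw [show 4*(k+1) = 4*k+4 by ring]; exact e4,
        by rw [show 4*(k+1)+1 = 4*k+5 by ring]; exact e5, hu', huv'⟩
  intro n
  obtain ⟨k, r, hn, hr⟩ : ∃ k r, n = 4*k + r ∧ r < 4 := ⟨n/4, n%4, by omega, by omega⟩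
  subst hn
  obtain ⟨u, v, h0, h1, hu, huv⟩ := key k
  obtain ⟨w, t, u', v', e2, e3, e4, e5, hw, ht, hu', huv'⟩ :=
    build_aux a ha k u v h0 h1 hu huv
  have hv : v % 2 = 1 := by omega
  interval_cases r
  · rw [show 4*k+0 = 4*k by ring, h0, val2_aux k u hu,
      if_neg (by omega), if_neg (by omega)]
    omega
  · rw [h1, val2_aux k v hv, if_neg (by omega), if_neg (by omega)]
    omega
  · rw [e2, val2_aux (k+1) w hw, if_pos (by omega)]
    omega
  · rw [e3, val2_aux (k+2) t ht, if_neg (by omega), if_pos (by omega)]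
    omega
end

section
/- For every n ≥ 1, d_n = gcd(a_n, a_{n-1}) equals 2^k if n ∈ {4k, 4k+1, 4k+2} and 2^{k+1} if n = 4k+3. -/
open Finset

namespace Stmt17Aux

def E (k : ℕ) : ℕ := Nat.doubleFactorial (2*k - 1)

lemma E_zero : E 0 = 1 := rfl

lemma E_succ (k : ℕ) : E (k+1) = (2*k+1) * E k := by
  cases k with
  | zero => rfl
  | succ m =>
      show Nat.doubleFactorial (2*(m+2)-1) = (2*(m+1)+1) * Nat.doubleFactorial (2*(m+1)-1)
      have h1 : 2*(m+2)-1 = (2*m+1)+2 := by omega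
      have h2 : 2*(m+1)-1 = 2*m+1 := by omega
      rw [h1, h2, Nat.doubleFactorial_add_two]
      ring

def N : ℕ → ℕ
  | 0 => 1
  | 1 => 1
  | n + 2 => N (n+1) + (n+1) * N n

lemma N_rec (n : ℕ) : N (n+2) = N (n+1) + (n+1) * N n := rfl

lemma formula : ∀ n, N n = ∑ k ∈ range (n+1), n.choose (2*k) * E k := by
  intro n
  induction n using Nat.twoStepInduction with
  | zero => simp [N, E]
  | one => simp [N, E, Finset.sum_range_succ]
  | more n ih1 ih2 =>
      rw [N_rec, ih1, ih2]
      rw [show n+2+1 = (n+2)+1 from rfl, Finset.sum_range_succ' (fun k => (n+2).choose (2*k) * E k) (n+2)]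
      have hterm : ∀ k, (n+2).choose (2*(k+1)) * E (k+1)
          = (n+1).choose (2*k+1) * E (k+1) + (n+1).choose (2*k+2) * E (k+1) := by
        intro k
        have h : 2*(k+1) = (2*k+1)+1 := by ring
        rw [h, show n+2 = (n+1)+1 from rfl, Nat.choose_succ_succ, add_mul]
      rw [Finset.sum_congr rfl (fun k _ => hterm k), Finset.sum_add_distrib]
      rw [Finset.sum_range_succ (fun k => (n+1).choose (2*k+1) * E (k+1)) (n+1)]
      rw [Finset.sum_range_succ (fun k => (n+1).choose (2*k+2) * E (k+1)) (n+1)]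
      rw [Nat.choose_eq_zero_of_lt (by omega : n+1 < 2*(n+1)+1)]
      rw [Nat.choose_eq_zero_of_lt (by omega : n+1 < 2*(n+1)+2)]
      rw [Finset.sum_range_succ' (fun k => (n+1).choose (2*k) * E k) (n+1)]
      have hterm2 : ∀ k, (n+1).choose (2*(k+1)) * E (k+1) = (n+1).choose (2*k+2) * E (k+1) := by
        intro k
        have h : 2*(k+1) = 2*k+2 := by ring
        rw [h]
      rw [Finset.sum_congr rfl (fun k _ => hterm2 k)]
      have hmul : (n+1) * ∑ k ∈ range (n+1), n.choose (2*k) * E k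
          = ∑ k ∈ range (n+1), (n+1).choose (2*k+1) * E (k+1) := by
        rw [Finset.mul_sum]
        refine Finset.sum_congr rfl (fun k _ => ?_)
        rw [E_succ, ← mul_assoc, ← mul_assoc]
        congr 1
        rw [show (n+1) * n.choose (2*k) = Nat.succ n * n.choose (2*k) from rfl,
          Nat.add_one_mul_choose_eq]
      rw [hmul]
      simp [E_zero]
      ring


lemma N_prime_modeq {q : ℕ} (hq : q.Prime) (ho : Odd q) : N q ≡ 1 [MOD q] := by
  have h3 : 3 ≤ q := by
    have h2 := hq.two_le
    rcases Nat.lt_or_ge q 3 with h | h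
    · interval_cases q
      · exact absurd ho (by decide)
    · exact h
  rw [formula q, Finset.sum_range_succ' (fun k => q.choose (2*k) * E k) q]
  have hdvd : q ∣ ∑ k ∈ range q, q.choose (2*(k+1)) * E (k+1) := by
    refine Finset.dvd_sum (fun k _ => ?_)
    by_cases h : 2*(k+1) ≤ q
    · have hne : 2*(k+1) ≠ q := by
        intro he
        exact (Nat.not_even_iff_odd.mpr ho) ⟨k+1, by omega⟩
      exact Dvd.dvd.mul_right (hq.dvd_choose_self (by omega) (by omega)) _
    · rw [Nat.choose_eq_zero_of_lt (by omega)]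
      simp
  have : q.choose (2*0) * E 0 = 1 := by simp [E_zero]
  rw [this]
  calc (∑ k ∈ range q, q.choose (2*(k+1)) * E (k+1)) + 1
      ≡ 0 + 1 [MOD q] := Nat.ModEq.add_right 1 ((Nat.modEq_zero_iff_dvd).mpr hdvd)
    _ = 1 := by ring

lemma q_dvd_E {q k : ℕ} (h3 : 3 ≤ q) (he : 2*(k+1)-1 = q) : q ∣ E (k+1) := by
  show q ∣ Nat.doubleFactorial (2*(k+1) - 1)
  rw [he, show q = (q-2)+2 by omega, Nat.doubleFactorial_add_two]
  exact ⟨Nat.doubleFactorial (q-2), by rw [show (q-2)+2 = q by omega]⟩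

lemma N_prime_succ_modeq {q : ℕ} (hq : q.Prime) (ho : Odd q) : N (q+1) ≡ 1 [MOD q] := by
  have h3 : 3 ≤ q := by
    have h2 := hq.two_le
    rcases Nat.lt_or_ge q 3 with h | h
    · interval_cases q
      · exact absurd ho (by decide)
    · exact h
  rw [formula (q+1), Finset.sum_range_succ' (fun k => (q+1).choose (2*k) * E k) (q+1)]
  have hdvd : q ∣ ∑ k ∈ range (q+1), (q+1).choose (2*(k+1)) * E (k+1) := by
    refine Finset.dvd_sum (fun k _ => ?_)
    rcases Nat.lt_trichotomy (2*(k+1)) (q+1) with h | h | h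
    · -- 2k+2 ≤ q, even so < q
      have hlt : 2*(k+1) < q := by
        rcases Nat.lt_or_ge (2*(k+1)) q with h' | h'
        · exact h'
        · exfalso
          have : 2*(k+1) = q := by omega
          exact (Nat.not_even_iff_odd.mpr ho) ⟨k+1, by omega⟩
      have hsplit : (q+1).choose (2*(k+1)) = q.choose (2*k+1) + q.choose (2*k+2) := by
        rw [show 2*(k+1) = (2*k+1)+1 by ring, Nat.choose_succ_succ]
      have d1 : q ∣ q.choose (2*k+1) := hq.dvd_choose_self (by omega) (by omega)
      have d2 : q ∣ q.choose (2*k+2) := hq.dvd_choose_self (by omega) (by omega)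
      rw [hsplit]
      exact Dvd.dvd.mul_right (Nat.dvd_add d1 d2) _
    · -- 2(k+1) = q+1 : term is E(k+1) = q‼, divisible by q
      exact Dvd.dvd.mul_left (q_dvd_E h3 (by omega)) _
    · rw [Nat.choose_eq_zero_of_lt (by omega)]
      simp
  have : (q+1).choose (2*0) * E 0 = 1 := by simp [E_zero]
  rw [this]
  calc (∑ k ∈ range (q+1), (q+1).choose (2*(k+1)) * E (k+1)) + 1
      ≡ 0 + 1 [MOD q] := Nat.ModEq.add_right 1 ((Nat.modEq_zero_iff_dvd).mpr hdvd)
    _ = 1 := by ring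

lemma N_periodic {q : ℕ} (hq : q.Prime) (ho : Odd q) : ∀ n, N (n+q) ≡ N n [MOD q] := by
  intro n
  induction n using Nat.twoStepInduction with
  | zero => simpa [show N 0 = 1 from rfl] using N_prime_modeq hq ho
  | one =>
      have := N_prime_succ_modeq hq ho
      rw [show 1+q = q+1 by omega]
      simpa [show N 1 = 1 from rfl] using this
  | more n ih1 ih2 =>
      rw [show n+2+q = (n+q)+2 by omega, N_rec, N_rec]
      have hc : (n+q+1) ≡ (n+1) [MOD q] := by
        show (n+q+1) % q = (n+1) % q
        rw [show n+q+1 = (n+1)+q by omega]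
        exact Nat.add_mod_right _ _
      have ih1' : N (n+q+1) ≡ N (n+1) [MOD q] := by
        rw [show n+q+1 = (n+1)+q by omega]
        exact ih2
      exact Nat.ModEq.add ih1' (Nat.ModEq.mul hc (by simpa using ih1))

lemma N_mul_modeq {q : ℕ} (hq : q.Prime) (ho : Odd q) : ∀ t, N (q*t) ≡ 1 [MOD q] := by
  intro t
  induction t with
  | zero => simp [N, Nat.ModEq.refl]
  | succ t ih =>
      rw [Nat.mul_succ]
      exact (N_periodic hq ho (q*t)).trans ih

lemma N_noconsec {q : ℕ} (hq : q.Prime) (ho : Odd q) : ∀ n, ¬ (q ∣ N (n+1) ∧ q ∣ N n) := by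
  intro n
  induction n with
  | zero =>
      rintro ⟨h1, _⟩
      have : N 1 = 1 := rfl
      rw [this] at h1
      exact hq.one_lt.ne' (Nat.dvd_one.mp h1)
  | succ n ih =>
      rintro ⟨h2, h1⟩
      have hd : q ∣ (n+1) * N n := by
        have hsub : N (n+2) - N (n+1) = (n+1) * N n := by rw [N_rec]; omega
        rw [← hsub]
        exact Nat.dvd_sub h2 h1
      rcases (Nat.Prime.dvd_mul hq).mp hd with h | h
      · obtain ⟨t, ht⟩ := h
        have hmod := N_mul_modeq hq ho t
        rw [← ht] at hmod
        have e1 : N (n+1) % q = 1 % q := hmod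
        have e2 : N (n+1) % q = 0 := by have h : N (n+1) % q = 0 % q := Nat.modEq_zero_iff_dvd.mpr h1; simpa using h
        have e3 : 1 % q = 1 := Nat.mod_eq_of_lt hq.one_lt
        omega
      · exact ih ⟨h1, h⟩

lemma odd_not_dvd {e : ℕ} {u : ℤ} (hu : Odd u) : ¬ ((2:ℤ)^(e+1) ∣ 2^e * u) := by
  rintro ⟨c, hc⟩
  have h2e : (2:ℤ)^e ≠ 0 := by positivity
  have hu2 : u = 2 * c := by
    apply mul_left_cancel₀ h2e
    rw [hc]; ring
  rw [hu2] at hu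
  exact (Int.not_odd_iff_even.mpr ⟨c, by ring⟩) hu

lemma gcd_pow_two {X Y : ℤ} {e : ℕ} (h1 : (2:ℤ)^e ∣ X) (h2 : (2:ℤ)^e ∣ Y)
    (h3 : ¬ ((2:ℤ)^(e+1) ∣ X) ∨ ¬ ((2:ℤ)^(e+1) ∣ Y))
    (h4 : ∀ q : ℕ, q.Prime → q ≠ 2 → ¬ ((q:ℤ) ∣ X ∧ (q:ℤ) ∣ Y)) :
    Int.gcd X Y = 2^e := by
  have hdvd : ((2^e : ℕ) : ℤ) ∣ (Int.gcd X Y : ℤ) := by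
    push_cast
    exact Int.dvd_coe_gcd h1 h2
  have hg2 : 2^e ∣ Int.gcd X Y := Int.natCast_dvd_natCast.mp hdvd
  obtain ⟨m, hm⟩ := hg2
  suffices hm1 : m = 1 by rw [hm, hm1, mul_one]
  by_contra hne
  have hm0 : m ≠ 0 := by
    rintro rfl
    rw [mul_zero] at hm
    have hXY := Int.gcd_eq_zero_iff.mp hm
    rcases h3 with h | h
    · exact h (by rw [hXY.1]; exact dvd_zero _)
    · exact h (by rw [hXY.2]; exact dvd_zero _)
  obtain ⟨q, hqp, hqd⟩ := Nat.exists_prime_and_dvd hne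
  have hqg : q ∣ Int.gcd X Y := hm ▸ Dvd.dvd.mul_left hqd _
  have hqX : (q:ℤ) ∣ X := dvd_trans (Int.natCast_dvd_natCast.mpr hqg) (Int.gcd_dvd_left X Y)
  have hqY : (q:ℤ) ∣ Y := dvd_trans (Int.natCast_dvd_natCast.mpr hqg) (Int.gcd_dvd_right X Y)
  by_cases hq2 : q = 2
  · subst hq2
    obtain ⟨c, hc⟩ := hqd
    have hg' : 2^(e+1) ∣ Int.gcd X Y := ⟨c, by rw [hm, hc]; ring⟩
    have hgz : ((2^(e+1) : ℕ) : ℤ) ∣ (Int.gcd X Y : ℤ) := Int.natCast_dvd_natCast.mpr hg'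
    have hcast : (2:ℤ)^(e+1) ∣ ((Int.gcd X Y : ℕ) : ℤ) := by push_cast at hgz ⊢; exact hgz
    have hX' : (2:ℤ)^(e+1) ∣ X := hcast.trans (Int.gcd_dvd_left X Y)
    have hY' : (2:ℤ)^(e+1) ∣ Y := hcast.trans (Int.gcd_dvd_right X Y)
    rcases h3 with h | h
    · exact h hX'
    · exact h hY'
  · exact h4 q hqp hq2 ⟨hqX, hqY⟩

section Main

variable {a : ℕ → ℤ} (ha0 : a 0 = 1) (ha1 : a 1 = 1)
  (ha : ∀ n : ℕ, a (n + 2) = a (n + 1) + (n + 1) * a n)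

include ha0 ha1 ha

lemma a_eq_N : ∀ n, a n = (N n : ℤ) := by
  intro n
  induction n using Nat.twoStepInduction with
  | zero => rw [ha0]; rfl
  | one => rw [ha1]; rfl
  | more n ih1 ih2 =>
      rw [ha n, ih1, ih2, N_rec]
      push_cast
      ring

lemma no_odd_consec {n : ℕ} (hn : 1 ≤ n) :
    ∀ q : ℕ, q.Prime → q ≠ 2 → ¬ ((q:ℤ) ∣ a n ∧ (q:ℤ) ∣ a (n-1)) := by
  intro q hq hq2
  rintro ⟨d1, d0⟩
  obtain ⟨m, rfl⟩ : ∃ m, n = m + 1 := ⟨n-1, by omega⟩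
  rw [Nat.add_sub_cancel] at d0
  rw [a_eq_N ha0 ha1 ha] at d1 d0
  exact N_noconsec hq (hq.odd_of_ne_two hq2) m
    ⟨Int.natCast_dvd_natCast.mp d1, Int.natCast_dvd_natCast.mp d0⟩

lemma blocks : ∀ k : ℕ, ∃ u v w x : ℤ, Odd u ∧ Odd v ∧ Odd w ∧
    a (4*k) = 2^k * u ∧ a (4*k+1) = 2^k * v ∧
    a (4*k+2) = 2^(k+1) * w ∧ a (4*k+3) = 2^(k+2) * x := by
  intro k
  have ha2 : a 2 = 2 := by
    have h := ha 0
    rw [ha0, ha1] at h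
    push_cast at h
    linarith
  have ha3 : a 3 = 4 := by
    have h := ha 1
    rw [ha1, ha2] at h
    push_cast at h
    linarith
  induction k with
  | zero =>
      refine ⟨1, 1, 1, 1, ⟨0, by ring⟩, ⟨0, by ring⟩, ⟨0, by ring⟩, ?_, ?_, ?_, ?_⟩
      · rw [show 4*0 = 0 by norm_num, ha0]; norm_num
      · rw [show 4*0+1 = 1 by norm_num, ha1]; norm_num
      · rw [show 4*0+2 = 2 by norm_num, ha2]; norm_num
      · rw [show 4*0+3 = 3 by norm_num, ha3]; norm_num
  | succ k ih =>
      obtain ⟨u, v, w, x, hu, hv, hw, h0, h1, h2, h3⟩ := ih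
      set K : ℤ := (k : ℤ) with hK
      set u' : ℤ := 2*x + (4*K+3)*w with hu'def
      set v' : ℤ := u' + 8*(K+1)*x with hv'def
      set w' : ℤ := (2*K+3)*u' + 4*(K+1)*x with hw'def
      set x' : ℤ := (2*K+3)*u' + 2*(K+1)*(4*K+7)*x with hx'def
      have e4 : a (4*k+4) = 2^(k+1) * u' := by
        have r := ha (4*k+2)
        rw [show 4*k+2+2 = 4*k+4 by omega, show 4*k+2+1 = 4*k+3 by omega] at r
        rw [h2, h3] at r
        rw [r, hu'def]
        push_cast
        ring
      have e5 : a (4*k+5) = 2^(k+1) * v' := by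
        have r := ha (4*k+3)
        rw [show 4*k+3+2 = 4*k+5 by omega, show 4*k+3+1 = 4*k+4 by omega] at r
        rw [e4, h3] at r
        rw [r, hv'def, hu'def]
        push_cast
        ring
      have e6 : a (4*k+6) = 2^(k+2) * w' := by
        have r := ha (4*k+4)
        rw [show 4*k+4+2 = 4*k+6 by omega, show 4*k+4+1 = 4*k+5 by omega] at r
        rw [e5, e4] at r
        rw [r, hw'def, hv'def, hu'def]
        push_cast
        ring
      have e7 : a (4*k+7) = 2^(k+3) * x' := by
        have r := ha (4*k+5)
        rw [show 4*k+5+2 = 4*k+7 by omega, show 4*k+5+1 = 4*k+6 by omega] at r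
        rw [e6, e5] at r
        rw [r, hx'def, hw'def, hv'def, hu'def]
        push_cast
        ring
      have hU : Odd u' := by
        rw [hu'def]
        exact Even.add_odd ⟨x, by ring⟩ (Odd.mul ⟨2*K+1, by ring⟩ hw)
      have hV : Odd v' := by
        rw [hv'def]
        exact hU.add_even ⟨4*(K+1)*x, by ring⟩
      have hW : Odd w' := by
        rw [hw'def]
        exact Odd.add_even (Odd.mul ⟨K+1, by ring⟩ hU) ⟨2*(K+1)*x, by ring⟩
      refine ⟨u', v', w', x', hU, hV, hW, ?_, ?_, ?_, ?_⟩
      · rw [show 4*(k+1) = 4*k+4 by ring]; exact e4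
      · rw [show 4*(k+1)+1 = 4*k+5 by ring]; exact e5
      · rw [show 4*(k+1)+2 = 4*k+6 by ring]; exact e6
      · rw [show 4*(k+1)+3 = 4*k+7 by ring]; exact e7

end Main

end Stmt17Aux

theorem stmt_17 (a : ℕ → ℤ) (ha0 : a 0 = 1) (ha1 : a 1 = 1)
    (ha : ∀ n : ℕ, a (n + 2) = a (n + 1) + (n + 1) * a n) :
    ∀ n : ℕ, 1 ≤ n → ∀ k : ℕ,
      ((n = 4 * k ∨ n = 4 * k + 1 ∨ n = 4 * k + 2) →
        Int.gcd (a n) (a (n - 1)) = 2 ^ k) ∧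
      (n = 4 * k + 3 → Int.gcd (a n) (a (n - 1)) = 2 ^ (k + 1)) := by
  intro n hn k
  have hodd : ∀ q : ℕ, q.Prime → q ≠ 2 → ¬ ((q:ℤ) ∣ a n ∧ (q:ℤ) ∣ a (n-1)) :=
    Stmt17Aux.no_odd_consec ha0 ha1 ha hn
  constructor
  · rintro (rfl | rfl | rfl)
    · obtain ⟨j, rfl⟩ : ∃ j, k = j+1 := ⟨k-1, by omega⟩
      obtain ⟨u, v, w, x, hu, hv, hw, h0, h1, h2, h3⟩ := Stmt17Aux.blocks ha0 ha1 ha (j+1)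
      obtain ⟨u', v', w', x', hu', hv', hw', h0', h1', h2', h3'⟩ := Stmt17Aux.blocks ha0 ha1 ha j
      rw [show 4*(j+1) - 1 = 4*j+3 by omega] at hodd ⊢
      refine Stmt17Aux.gcd_pow_two ?_ ?_ ?_ hodd
      · rw [h0]; exact dvd_mul_right _ _
      · rw [h3']; exact ⟨2*x', by ring⟩
      · left; rw [h0]; exact Stmt17Aux.odd_not_dvd hu
    · obtain ⟨u, v, w, x, hu, hv, hw, h0, h1, h2, h3⟩ := Stmt17Aux.blocks ha0 ha1 ha k
      rw [show 4*k+1 - 1 = 4*k by omega] at hodd ⊢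
      refine Stmt17Aux.gcd_pow_two ?_ ?_ ?_ hodd
      · rw [h1]; exact dvd_mul_right _ _
      · rw [h0]; exact dvd_mul_right _ _
      · left; rw [h1]; exact Stmt17Aux.odd_not_dvd hv
    · obtain ⟨u, v, w, x, hu, hv, hw, h0, h1, h2, h3⟩ := Stmt17Aux.blocks ha0 ha1 ha k
      rw [show 4*k+2 - 1 = 4*k+1 by omega] at hodd ⊢
      refine Stmt17Aux.gcd_pow_two ?_ ?_ ?_ hodd
      · rw [h2]; exact ⟨2*w, by ring⟩
      · rw [h1]; exact dvd_mul_right _ _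
      · right; rw [h1]; exact Stmt17Aux.odd_not_dvd hv
  · rintro rfl
    obtain ⟨u, v, w, x, hu, hv, hw, h0, h1, h2, h3⟩ := Stmt17Aux.blocks ha0 ha1 ha k
    rw [show 4*k+3 - 1 = 4*k+2 by omega] at hodd ⊢
    refine Stmt17Aux.gcd_pow_two ?_ ?_ ?_ hodd
    · rw [h3]; exact ⟨2*x, by ring⟩
    · rw [h2]; exact dvd_mul_right _ _
    · right; rw [h2]; exact Stmt17Aux.odd_not_dvd hw
end

section
/- For every n ≥ 1, the reduced denominator D_n of x_n satisfies D_n ≥ √((n−1)!) / 2^{(n+1)/4}; in particular D_n > 1 for all n ≥ 4. -/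
open Nat Finset

private def aa : ℕ → ℕ
  | 0 => 1
  | 1 => 1
  | n+2 => aa (n+1) + (n+1) * aa n

private lemma aa_rec (n : ℕ) : aa (n+2) = aa (n+1) + (n+1) * aa n := rfl

private lemma aa_pos : ∀ n, 0 < aa n
  | 0 => one_pos
  | 1 => one_pos
  | n+2 => by rw [aa_rec]; have := aa_pos (n+1); omega

private lemma key_s18 (n : ℕ) :
    ∑ k ∈ Finset.range (n+3), (n+2).choose (2*k) * (2*k-1)‼
    = ∑ k ∈ Finset.range (n+2), (n+1).choose (2*k) * (2*k-1)‼
      + (n+1) * ∑ k ∈ Finset.range (n+1), n.choose (2*k) * (2*k-1)‼ := by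
  have term : ∀ k : ℕ, (n+2).choose (2*(k+1)) * (2*(k+1)-1)‼
      = (n+1).choose (2*(k+1)) * (2*(k+1)-1)‼ + (n+1) * (n.choose (2*k) * (2*k-1)‼) := by
    intro k
    have e1 : 2*(k+1) - 1 = 2*k+1 := by omega
    have e2 : (2*k+1)‼ = (2*k+1) * (2*k-1)‼ := by
      have h := Nat.doubleFactorial_add_one (2*k)
      simpa using h
    have e3 : (n+2).choose (2*k+2) = (n+1).choose (2*k+1) + (n+1).choose (2*k+2) :=
      Nat.choose_succ_succ (n+1) (2*k+1)
    have e4 : (n+1) * n.choose (2*k) = (n+1).choose (2*k+1) * (2*k+1) :=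
      Nat.add_one_mul_choose_eq n (2*k)
    rw [e1, show 2*(k+1) = 2*k+2 by ring, e2, e3]
    calc ((n+1).choose (2*k+1) + (n+1).choose (2*k+2)) * ((2*k+1) * (2*k-1)‼)
        = (n+1).choose (2*k+2) * ((2*k+1) * (2*k-1)‼)
          + ((n+1).choose (2*k+1) * (2*k+1)) * (2*k-1)‼ := by ring
      _ = (n+1).choose (2*k+2) * ((2*k+1) * (2*k-1)‼)
          + ((n+1) * n.choose (2*k)) * (2*k-1)‼ := by rw [← e4]
      _ = _ := by ring
  rw [Finset.sum_range_succ' _ (n+2)]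
  simp only [term]
  rw [Finset.sum_add_distrib, ← Finset.mul_sum]
  have hA : ∑ k ∈ Finset.range (n+2), (n+1).choose (2*(k+1)) * (2*(k+1)-1)‼
      + (n+2).choose (2*0) * (2*0-1)‼
      = ∑ k ∈ Finset.range (n+2), (n+1).choose (2*k) * (2*k-1)‼ := by
    rw [Finset.sum_range_succ' (fun k => (n+1).choose (2*k) * (2*k-1)‼) (n+1)]
    have hz : (n+1).choose (2*(n+1+1)) * (2*(n+1+1)-1)‼ = 0 := by
      rw [Nat.choose_eq_zero_of_lt (by omega)]; ring
    rw [Finset.sum_range_succ _ (n+1), hz]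
    simp
  have hB : ∑ k ∈ Finset.range (n+2), n.choose (2*k) * (2*k-1)‼
      = ∑ k ∈ Finset.range (n+1), n.choose (2*k) * (2*k-1)‼ := by
    rw [Finset.sum_range_succ, Nat.choose_eq_zero_of_lt (by omega)]
    simp
  rw [hB]
  omega

private lemma aa_eq_sum : ∀ n : ℕ, aa n = ∑ k ∈ Finset.range (n+1), n.choose (2*k) * (2*k-1)‼
  | 0 => by decide
  | 1 => by decide
  | n+2 => by
    rw [aa_rec, aa_eq_sum (n+1), aa_eq_sum n, ← key_s18]

private lemma aa_mod_one {p : ℕ} (hp : p.Prime) (hodd : p % 2 = 1) :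
    aa p ≡ 1 [MOD p] ∧ aa (p+1) ≡ 1 [MOD p] := by
  have hp3 : 3 ≤ p := by
    have := hp.two_le; omega
  constructor
  · rw [aa_eq_sum p, Finset.sum_range_succ' _ p]
    have h0 : p.choose (2*0) * (2*0-1)‼ = 1 := by norm_num
    rw [h0]
    have hdvd : p ∣ ∑ k ∈ Finset.range p, p.choose (2*(k+1)) * (2*(k+1)-1)‼ := by
      apply Finset.dvd_sum
      intro k _
      rcases Nat.lt_or_ge (2*(k+1)) p with h | h
      · exact Dvd.dvd.mul_right (hp.dvd_choose_self (by omega) h) _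
      · rcases Nat.eq_or_lt_of_le h with h' | h'
        · omega
        · rw [Nat.choose_eq_zero_of_lt h']
          simp
      
    obtain ⟨c, hc⟩ := hdvd
    rw [hc]
    simp [Nat.ModEq, Nat.mul_add_mod]
  · rw [aa_eq_sum (p+1), Finset.sum_range_succ' _ (p+1)]
    have h0 : (p+1).choose (2*0) * (2*0-1)‼ = 1 := by norm_num
    rw [h0]
    have hdvd : p ∣ ∑ k ∈ Finset.range (p+1), (p+1).choose (2*(k+1)) * (2*(k+1)-1)‼ := by
      apply Finset.dvd_sum
      intro k _
      rcases Nat.lt_or_ge (2*(k+1)) p with h | h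
      · -- p ∣ choose (p+1) (2k+2) since = choose p (2k+1) + choose p (2k+2)
        have e : (p+1).choose (2*k+2) = p.choose (2*k+1) + p.choose (2*k+2) :=
          Nat.choose_succ_succ p (2*k+1)
        have d1 : p ∣ p.choose (2*k+1) := hp.dvd_choose_self (by omega) (by omega)
        have d2 : p ∣ p.choose (2*k+2) := hp.dvd_choose_self (by omega) (by omega)
        have : p ∣ (p+1).choose (2*(k+1)) := by
          rw [show 2*(k+1) = 2*k+2 by ring, e]; exact Nat.dvd_add d1 d2
        exact this.mul_right _
      · rcases Nat.eq_or_lt_of_le h with h' | h'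
        · omega
        · -- 2(k+1) > p; cases 2(k+1) = p+1 or > p+1
          rcases Nat.eq_or_lt_of_le h' with h'' | h''
          · -- 2(k+1) = p+1, so (2(k+1)-1)‼ = p‼ divisible by p
            have e1 : 2*(k+1) - 1 = p := by omega
            obtain ⟨q, hq⟩ : ∃ q, p = q + 2 := ⟨p - 2, by omega⟩
            have : p ∣ (2*(k+1)-1)‼ := by
              rw [e1, hq, Nat.doubleFactorial_add_two]
              exact Dvd.intro _ rfl
            exact this.mul_left _
          · rw [Nat.choose_eq_zero_of_lt (by omega)]
            simp
    obtain ⟨c, hc⟩ := hdvd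
    rw [hc]
    simp [Nat.ModEq, Nat.mul_add_mod]

private lemma aa_period {p : ℕ} (hp : p.Prime) (hodd : p % 2 = 1) :
    ∀ n, aa (n+p) ≡ aa n [MOD p] ∧ aa (n+1+p) ≡ aa (n+1) [MOD p] := by
  intro n
  induction n with
  | zero =>
    have h := aa_mod_one hp hodd
    constructor
    · simpa [aa] using h.1
    · simpa [aa, Nat.add_comm] using h.2
  | succ m ih =>
    refine ⟨ih.2, ?_⟩
    have e : m+1+1+p = (m+p)+2 := by ring
    rw [e, aa_rec, aa_rec m]
    have hc : (m+p+1) ≡ (m+1) [MOD p] :=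
      ((Nat.modEq_iff_dvd' (by omega)).mpr ⟨1, by omega⟩).symm
    have := (ih.2).add (hc.mul ih.1)
    simpa [show m+1+p = m+p+1 by ring] using this

private lemma no_odd {p : ℕ} (hp : p.Prime) (hodd : p % 2 = 1) :
    ∀ n, ¬(p ∣ aa n ∧ p ∣ aa (n+1)) := by
  intro n
  induction n using Nat.strong_induction_on with
  | _ n ih =>
    rintro ⟨h1, h2⟩
    match n, h1, h2 with
    | 0, h1, h2 =>
      have : p ≤ 1 := Nat.le_of_dvd one_pos h1
      have := hp.two_le; omega
    | (m+1), h1, h2 =>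
      have hd : p ∣ (m+1) * aa m := by
        have : aa (m+2) - aa (m+1) = (m+1) * aa m := by rw [aa_rec]; omega
        have := Nat.dvd_sub h2 h1
        rwa [‹aa (m+2) - aa (m+1) = (m+1) * aa m›] at this
      rcases (Nat.Prime.dvd_mul hp).mp hd with hm | ha
      · -- p ∣ m+1, use periodicity
        have hple : p ≤ m+1 := Nat.le_of_dvd (by omega) hm
        set q := m + 1 - p with hq
        have e1 : q + p = m + 1 := by omega
        have c1 : aa (q+p) ≡ aa q [MOD p] := (aa_period hp hodd q).1
        have c2 : aa (q+1+p) ≡ aa (q+1) [MOD p] := (aa_period hp hodd q).2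
        have e2 : q + 1 + p = m + 2 := by omega
        rw [e1] at c1; rw [e2] at c2
        have d1 : p ∣ aa q := (Nat.modEq_zero_iff_dvd).mp
          ((c1.symm).trans ((Nat.modEq_zero_iff_dvd).mpr h1))
        have d2 : p ∣ aa (q+1) := (Nat.modEq_zero_iff_dvd).mp
          ((c2.symm).trans ((Nat.modEq_zero_iff_dvd).mpr h2))
        exact ih q (by have := hp.two_le; omega) ⟨d1, d2⟩
      · exact ih m (by omega) ⟨ha, h1⟩

private lemma gcd_two_pow (m : ℕ) : ∃ j, Nat.gcd (aa (m+1)) (aa m) = 2 ^ j := by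
  set g := Nat.gcd (aa (m+1)) (aa m) with hg
  have hgpos : g ≠ 0 := Nat.gcd_ne_zero_right (aa_pos m).ne'
  refine ⟨g.primeFactorsList.length, ?_⟩
  apply Nat.eq_prime_pow_of_unique_prime_dvd hgpos
  intro q hq hqd
  by_contra hq2
  have hqodd : q % 2 = 1 := by
    rcases hq.eq_two_or_odd with h | h
    · exact absurd h hq2
    · exact h
  exact no_odd hq hqodd m ⟨hqd.trans (Nat.gcd_dvd_right _ _), hqd.trans (Nat.gcd_dvd_left _ _)⟩

private lemma quad : ∀ k : ℕ, ∃ u v w t : ℕ, Odd u ∧ Odd v ∧ Odd w ∧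
    aa (4*k) = 2^k * u ∧ aa (4*k+1) = 2^k * v ∧ aa (4*k+2) = 2^(k+1) * w ∧
    aa (4*k+3) = 2^(k+2) * t := by
  intro k
  induction k with
  | zero =>
    exact ⟨1, 1, 1, 1, odd_one, odd_one, odd_one, by decide, by decide, by decide, by decide⟩
  | succ k ih =>
    obtain ⟨u, v, w, t, hu, hv, hw, e0, e1, e2, e3⟩ := ih
    refine ⟨2*t + (4*k+3)*w, (2*t + (4*k+3)*w) + 8*(k+1)*t,
      (2*k+3)*(2*t + (4*k+3)*w) + 4*(k+1)*t,
      (2*k+3)*(2*t + (4*k+3)*w) + 2*(k+1)*(4*k+7)*t, ?_, ?_, ?_, ?_, ?_, ?_, ?_⟩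
    · exact (even_two_mul t).add_odd (Odd.mul ⟨2*k+1, by ring⟩ hw)
    · exact ((even_two_mul t).add_odd (Odd.mul ⟨2*k+1, by ring⟩ hw)).add_even
        (by exact ⟨4*(k+1)*t, by ring⟩)
    · exact (Odd.mul ⟨k+1, by ring⟩ ((even_two_mul t).add_odd
        (Odd.mul ⟨2*k+1, by ring⟩ hw))).add_even ⟨2*(k+1)*t, by ring⟩
    · have : 4*(k+1) = (4*k+2)+2 := by ring
      rw [this, aa_rec, e3, e2]; ring
    · have h4 : aa (4*k+4) = 2^(k+1) * (2*t + (4*k+3)*w) := by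
        have : 4*k+4 = (4*k+2)+2 := by ring
        rw [this, aa_rec, e3, e2]; ring
      have : 4*(k+1)+1 = (4*k+3)+2 := by ring
      rw [this, aa_rec, e3, show 4*k+3+1 = 4*k+4 by ring, h4]; ring
    · have h4 : aa (4*k+4) = 2^(k+1) * (2*t + (4*k+3)*w) := by
        have : 4*k+4 = (4*k+2)+2 := by ring
        rw [this, aa_rec, e3, e2]; ring
      have h5 : aa (4*k+5) = 2^(k+1) * ((2*t + (4*k+3)*w) + 8*(k+1)*t) := by
        have : 4*k+5 = (4*k+3)+2 := by ring
        rw [this, aa_rec, e3, show 4*k+3+1 = 4*k+4 by ring, h4]; ring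
      have : 4*(k+1)+2 = (4*k+4)+2 := by ring
      rw [this, aa_rec, show 4*k+4+1 = 4*k+5 by ring, h5, h4]; ring
    · have h4 : aa (4*k+4) = 2^(k+1) * (2*t + (4*k+3)*w) := by
        have : 4*k+4 = (4*k+2)+2 := by ring
        rw [this, aa_rec, e3, e2]; ring
      have h5 : aa (4*k+5) = 2^(k+1) * ((2*t + (4*k+3)*w) + 8*(k+1)*t) := by
        have : 4*k+5 = (4*k+3)+2 := by ring
        rw [this, aa_rec, e3, show 4*k+3+1 = 4*k+4 by ring, h4]; ring
      have h6 : aa (4*k+6) = 2^(k+2) * ((2*k+3)*(2*t + (4*k+3)*w) + 4*(k+1)*t) := by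
        have : 4*k+6 = (4*k+4)+2 := by ring
        rw [this, aa_rec, show 4*k+4+1 = 4*k+5 by ring, h5, h4]; ring
      have : 4*(k+1)+3 = (4*k+5)+2 := by ring
      rw [this, aa_rec, show 4*k+5+1 = 4*k+6 by ring, h6, h5]; ring

private lemma le_of_pow_dvd {j e c : ℕ} (hc : Odd c) (h : 2^j ∣ 2^e * c) : j ≤ e := by
  by_contra hlt
  push_neg at hlt
  have h2 : 2^(e+1) ∣ 2^e * c := (pow_dvd_pow 2 (by omega)).trans h
  rw [pow_succ] at h2
  have : 2 ∣ c := (Nat.mul_dvd_mul_iff_left (a := 2^e) (by positivity)).mp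
    (by rwa [mul_comm (2^e) 2] at h2 ⊢)
  rcases Nat.odd_iff.mp hc with h'
  omega

private lemma gcd_bound (m : ℕ) :
    ∃ j, Nat.gcd (aa (m+1)) (aa m) = 2 ^ j ∧ 4*j ≤ m + 2 := by
  obtain ⟨j, hj⟩ := gcd_two_pow m
  refine ⟨j, hj, ?_⟩
  have hd1 : 2^j ∣ aa m := hj ▸ Nat.gcd_dvd_right _ _
  have hd2 : 2^j ∣ aa (m+1) := hj ▸ Nat.gcd_dvd_left _ _
  set k := m / 4 with hk
  have hr : m % 4 = 0 ∨ m % 4 = 1 ∨ m % 4 = 2 ∨ m % 4 = 3 := by omega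
  obtain ⟨u, v, w, t, hu, hv, hw, e0, e1, e2, e3⟩ := quad k
  rcases hr with h | h | h | h
  · have em : m = 4*k := by omega
    rw [em, e0] at hd1
    have := le_of_pow_dvd hu hd1
    omega
  · have em : m = 4*k+1 := by omega
    rw [em, e1] at hd1
    have := le_of_pow_dvd hv hd1
    omega
  · have em : m = 4*k+2 := by omega
    rw [em, e2] at hd1
    have := le_of_pow_dvd hw hd1
    omega
  · have em : m + 1 = 4*(k+1) := by omega
    obtain ⟨u', v', w', t', hu', _, _, f0, _, _, _⟩ := quad (k+1)
    rw [em, f0] at hd2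
    have := le_of_pow_dvd hu' hd2
    omega

private lemma x_eq (x : ℕ → ℚ) (hx0 : x 0 = 1)
    (hx : ∀ n : ℕ, x (n + 1) = 1 + (n : ℚ) / x n) :
    ∀ m : ℕ, x (m+1) = (aa (m+1) : ℚ) / (aa m : ℚ) := by
  intro m
  induction m with
  | zero => rw [hx 0]; norm_num [aa]
  | succ m ih =>
    have ham : (aa m : ℚ) ≠ 0 := by exact_mod_cast (aa_pos m).ne'
    have ham1 : (aa (m+1) : ℚ) ≠ 0 := by exact_mod_cast (aa_pos (m+1)).ne'
    rw [hx (m+1), ih, aa_rec]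
    push_cast
    field_simp

private lemma den_eq (x : ℕ → ℚ) (hx0 : x 0 = 1)
    (hx : ∀ n : ℕ, x (n + 1) = 1 + (n : ℚ) / x n) (m : ℕ) :
    (x (m+1)).den = aa m / Nat.gcd (aa (m+1)) (aa m) := by
  set g := Nat.gcd (aa (m+1)) (aa m) with hg
  have hgpos : 0 < g := Nat.gcd_pos_of_pos_right _ (aa_pos m)
  set p := aa (m+1) / g with hp
  set q := aa m / g with hq
  have hfp : aa (m+1) = g * p := by
    rw [hp, Nat.mul_div_cancel' (Nat.gcd_dvd_left _ _)]
  have hfq : aa m = g * q := by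
    rw [hq, Nat.mul_div_cancel' (Nat.gcd_dvd_right _ _)]
  have hqpos : 0 < q := by
    rcases Nat.eq_zero_or_pos q with h | h
    · rw [h, mul_zero] at hfq; exact absurd hfq (aa_pos m).ne'
    · exact h
  have hco : Nat.Coprime p q := Nat.coprime_div_gcd_div_gcd hgpos
  have hxpq : x (m+1) = ((p : ℤ) : ℚ) / ((q : ℤ) : ℚ) := by
    rw [x_eq x hx0 hx m, hfp, hfq]
    push_cast
    rw [mul_div_mul_left]
    exact_mod_cast hgpos.ne'
  have := Rat.den_div_eq_of_coprime (a := (p : ℤ)) (b := (q : ℤ))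
    (by exact_mod_cast hqpos) (by simpa using hco)
  rw [← hxpq] at this
  exact_mod_cast this


private lemma fact_le_sq : ∀ m : ℕ, m ! ≤ aa m * aa m
  | 0 => le_refl 1
  | 1 => le_refl 1
  | m+2 => by
    have h0 := fact_le_sq m
    have h1 := fact_le_sq (m+1)
    rw [aa_rec]
    have hf2 : (m+2)! = (m+2) * ((m+1) * m !) := by
      rw [Nat.factorial_succ, Nat.factorial_succ]
    have hf1 : (m+1)! = (m+1) * m ! := Nat.factorial_succ m
    rw [hf2]
    rw [hf1] at h1
    have e2 : (m+1)*(m+1)* m ! ≤ (m+1)*(m+1)*(aa m * aa m) :=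
      Nat.mul_le_mul_left _ h0
    nlinarith [Nat.zero_le (aa (m+1) * ((m+1) * aa m))]

private lemma fact_gt (m : ℕ) (hm : 3 ≤ m) : 2^(m+2) < m ! * m ! := by
  induction m, hm using Nat.le_induction with
  | base => decide
  | succ m hm ih =>
    have hf : (m+1)! = (m+1) * m ! := Nat.factorial_succ m
    have hp : 0 < m ! := Nat.factorial_pos m
    have h2 : 2 ≤ (m+1)*(m+1) := by nlinarith
    calc 2^(m+1+2) = 2 * 2^(m+2) := by ring
      _ < 2 * (m ! * m !) := by omega
      _ ≤ ((m+1)*(m+1)) * (m ! * m !) := Nat.mul_le_mul_right _ h2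
      _ = (m+1)! * (m+1)! := by rw [hf]; ring

theorem stmt_18 (x : ℕ → ℚ) (hx0 : x 0 = 1)
    (hx : ∀ n : ℕ, x (n + 1) = 1 + (n : ℚ) / x n) :
    (∀ n : ℕ, 1 ≤ n →
      Real.sqrt (((n - 1)! : ℕ) : ℝ) / (2 : ℝ) ^ (((n : ℝ) + 1) / 4) ≤ ((x n).den : ℝ)) ∧
    (∀ n : ℕ, 4 ≤ n → 1 < (x n).den) := by
  have main : ∀ m : ℕ,
      Real.sqrt ((m ! : ℕ) : ℝ) / (2 : ℝ) ^ ((((m : ℝ) + 1) + 1) / 4)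
        ≤ ((x (m+1)).den : ℝ) := by
    intro m
    obtain ⟨j, hj, hjb⟩ := gcd_bound m
    have hden := den_eq x hx0 hx m
    set g := Nat.gcd (aa (m+1)) (aa m) with hgdef
    have hgd : g ∣ aa m := Nat.gcd_dvd_right _ _
    have hgpos : 0 < g := Nat.gcd_pos_of_pos_right _ (aa_pos m)
    have hcast : (((x (m+1)).den : ℕ) : ℝ) = (aa m : ℝ) / (g : ℝ) := by
      rw [hden, Nat.cast_div hgd (by exact_mod_cast hgpos.ne')]
    rw [hcast]
    apply div_le_div₀ (by positivity) ?_ (by exact_mod_cast hgpos) ?_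
    · have h1 : ((m ! : ℕ):ℝ) ≤ (aa m:ℝ) * (aa m:ℝ) := by exact_mod_cast fact_le_sq m
      calc Real.sqrt ((m ! : ℕ):ℝ) ≤ Real.sqrt ((aa m:ℝ) * (aa m:ℝ)) := Real.sqrt_le_sqrt h1
        _ = (aa m : ℝ) := Real.sqrt_mul_self (by positivity)
    · rw [hj]
      push_cast
      rw [← Real.rpow_natCast 2 j]
      apply Real.rpow_le_rpow_of_exponent_le one_le_two
      have : (j:ℝ)*4 ≤ (m:ℝ) + 2 := by exact_mod_cast by omega
      linarith
  constructor
  · intro n hn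
    match n, hn with
    | (m+1), _ =>
      have := main m
      simpa using this
  · intro n hn
    match n, hn with
    | (m+1), hn =>
      have hm : 3 ≤ m := by omega
      have hmain := main m
      have hrpos : (0:ℝ) < (2 : ℝ) ^ ((((m : ℝ) + 1) + 1) / 4) :=
        Real.rpow_pos_of_pos (by norm_num) _
      have step2 : ((2:ℝ) ^ (((m:ℝ)+2)/2)) ^ (2:ℕ) < (((m ! : ℕ):ℝ)) ^ (2:ℕ) := by
        rw [← Real.rpow_natCast ((2:ℝ) ^ (((m:ℝ)+2)/2)) 2,
          ← Real.rpow_mul (by norm_num : (0:ℝ) ≤ 2),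
          show ((m:ℝ)+2)/2*((2:ℕ):ℝ) = (((m+2:ℕ)):ℝ) by push_cast; ring,
          Real.rpow_natCast]
        have h := fact_gt m hm
        have h' : ((2:ℝ)) ^ (m+2:ℕ) < ((m ! :ℕ):ℝ) * ((m ! :ℕ):ℝ) := by exact_mod_cast h
        calc ((2:ℝ)) ^ (m+2:ℕ) < ((m ! :ℕ):ℝ) * ((m ! :ℕ):ℝ) := h'
          _ = (((m ! : ℕ):ℝ)) ^ (2:ℕ) := by ring
      have h2 : (2:ℝ) ^ (((m:ℝ)+2)/2) < ((m ! : ℕ):ℝ) :=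
        lt_of_pow_lt_pow_left₀ 2 (by positivity) step2
      have step1 : ((2 : ℝ) ^ ((((m : ℝ) + 1) + 1) / 4)) ^ (2:ℕ)
          = (2:ℝ) ^ (((m:ℝ)+2)/2) := by
        rw [← Real.rpow_natCast ((2:ℝ) ^ ((((m : ℝ) + 1) + 1) / 4)) 2,
          ← Real.rpow_mul (by norm_num : (0:ℝ) ≤ 2)]
        congr 1
        push_cast
        ring
      have hlt : (2 : ℝ) ^ ((((m : ℝ) + 1) + 1) / 4) < Real.sqrt ((m ! : ℕ) : ℝ) := by
        rw [Real.lt_sqrt hrpos.le]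
        calc ((2 : ℝ) ^ ((((m : ℝ) + 1) + 1) / 4)) ^ (2:ℕ)
            = (2:ℝ) ^ (((m:ℝ)+2)/2) := step1
          _ < ((m ! : ℕ):ℝ) := h2
      have hgt1 : (1:ℝ) < Real.sqrt ((m ! : ℕ) : ℝ) / (2 : ℝ) ^ ((((m : ℝ) + 1) + 1) / 4) :=
        (one_lt_div hrpos).mpr hlt
      have hfin : (1:ℝ) < ((x (m+1)).den : ℝ) := lt_of_lt_of_le hgt1 hmain
      exact_mod_cast hfin
end
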